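/- arXiv:1802.01881 — 11 statements merged into one kernel-verified Lean document; each statement's English description precedes it below -/
import Mathlib

section
/- Let Γ be a finite k-regular simple graph with n vertices and finite girth g ≥ 3, and let d = ⌊g/2⌋. If g is odd, then n ≥ 1 + k·∑_{j=0}^{(g−3)/2} (k−1)^j; if g is even, then n ≥ 2·∑_{j=0}^{(g−2)/2} (k−1)^j. -/
open SimpleGraph

/-- `s` is the edge set of some cycle of length `g` in `G`. -/
def IsGirthCycleEdgeSet {V : Type*} (G : SimpleGraph V) (g : ℕ) (s : Set (Sym2 V)) : Prop :=
  ∃ (u : V) (w : G.Walk u u), w.IsCycle ∧ w.length = g ∧ s = {e | e ∈ w.edges}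

/-- The number of cycles of length `g` in `G` that contain the edge `e`. -/
noncomputable def girthCycleCount {V : Type*} (G : SimpleGraph V) (g : ℕ) (e : Sym2 V) : ℕ :=
  Set.ncard {s : Set (Sym2 V) | IsGirthCycleEdgeSet G g s ∧ e ∈ s}

/-- The multiset of the numbers of `g`-cycles through the edges incident to `v`. -/
noncomputable def vertexSignature {V : Type*} [Fintype V] (G : SimpleGraph V) (g : ℕ)
    (v : V) : Multiset ℕ :=
  ((G.neighborSet v).toFinite.toFinset.val).map fun u => girthCycleCount G g s(v, u)

namespace MooreAux

variable {V : Type*} [DecidableEq V] {G : SimpleGraph V}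

lemma egirth_le_of_isCycle {a : V} {w : G.Walk a a} (h : w.IsCycle) :
    G.egirth ≤ w.length :=
  iInf_le_of_le a (iInf_le_of_le w (iInf_le _ h))

lemma dist_add_dist_le_of_mem_support {s t u : V} (c : G.Walk s t) (h : u ∈ c.support) :
    G.dist s u + G.dist u t ≤ c.length := by
  have hspec := congrArg Walk.length (c.take_spec h)
  rw [Walk.length_append] at hspec
  have h1 : G.dist s u ≤ (c.takeUntil u h).length := SimpleGraph.dist_le _
  have h2 : G.dist u t ≤ (c.dropUntil u h).length := SimpleGraph.dist_le _
  omega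

lemma dist_pos_of_adj {u v : V} (h : G.Adj u v) : 1 ≤ G.dist u v := by
  have := SimpleGraph.dist_eq_one_iff_adj.mpr h
  omega

/-- From an edge `x–y` and walks from `x` and `y` to a common vertex avoiding the edge,
we get a short cycle. -/
lemma cyc0 {x y u : V} (hadj : G.Adj x y) (p : G.Walk x u) (q : G.Walk y u)
    (hp : s(x,y) ∉ p.edges) (hq : s(x,y) ∉ q.edges) :
    ∃ w : G.Walk y y, w.IsCycle ∧ w.length ≤ p.length + q.length + 1 := by
  set W := (p.append q.reverse).bypass with hW
  refine ⟨Walk.cons hadj.symm W, ?_, ?_⟩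
  · rw [Walk.cons_isCycle_iff]
    refine ⟨(p.append q.reverse).bypass_isPath, fun hmem => ?_⟩
    have := (p.append q.reverse).edges_bypass_subset hmem
    rw [Walk.edges_append, Walk.edges_reverse, List.mem_append] at this
    rcases this with h | h
    · rw [Sym2.eq_swap] at h; exact hp h
    · rw [List.mem_reverse, Sym2.eq_swap] at h; exact hq h
  · have h1 : W.length ≤ (p.append q.reverse).length :=
      (p.append q.reverse).length_bypass_le
    rw [Walk.length_append, Walk.length_reverse] at h1
    simp only [Walk.length_cons]
    omega

/-- Two distinct neighbors of `u` close to a root `v` give a short cycle: contradiction. -/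
lemma C1 {g : ℕ} (hg : G.egirth = (g : ℕ∞)) {v u a b : V} {m : ℕ}
    (hua : G.Adj u a) (hub : G.Adj u b) (hab : a ≠ b)
    (hra : G.Reachable v a) (hrb : G.Reachable v b)
    (hda : G.dist v a ≤ m) (hdb : G.dist v b ≤ m) (hdu : m ≤ G.dist v u)
    (hlt : 2 * m + 2 < g) : False := by
  rcases Nat.eq_zero_or_pos m with hm | hm
  · have ha0 : a = v := by
      have h0 : G.dist v a = 0 := by omega
      exact (hra.dist_eq_zero_iff.mp h0).symm
    have hb0 : b = v := by
      have h0 : G.dist v b = 0 := by omega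
      exact (hrb.dist_eq_zero_iff.mp h0).symm
    exact hab (ha0.trans hb0.symm)
  · obtain ⟨pa, hpa⟩ := hra.exists_walk_length_eq_dist
    obtain ⟨pb, hpb⟩ := hrb.exists_walk_length_eq_dist
    have hupa : u ∉ pa.support := by
      intro h
      have hle := dist_add_dist_le_of_mem_support pa h
      have h1 : 1 ≤ G.dist u a := dist_pos_of_adj hua
      omega
    have hupb : u ∉ pb.support := by
      intro h
      have hle := dist_add_dist_le_of_mem_support pb h
      have h1 : 1 ≤ G.dist u b := dist_pos_of_adj hub
      omega
    have he1 : s(u, a) ∉ (Walk.cons hub pb.reverse).edges := by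
      intro hmem
      rw [Walk.edges_cons, List.mem_cons] at hmem
      rcases hmem with h | h
      · exact hab (Sym2.congr_right.mp h)
      · rw [Walk.edges_reverse, List.mem_reverse] at h
        exact hupb (pb.fst_mem_support_of_mem_edges h)
    have he2 : s(u, a) ∉ pa.reverse.edges := by
      intro hmem
      rw [Walk.edges_reverse, List.mem_reverse] at hmem
      exact hupa (pa.fst_mem_support_of_mem_edges hmem)
    obtain ⟨w, hw, hlen⟩ := cyc0 hua (Walk.cons hub pb.reverse) pa.reverse he1 he2
    have hle := egirth_le_of_isCycle hw
    rw [hg] at hle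
    have hgle : g ≤ w.length := by exact_mod_cast hle
    have : w.length ≤ 2 * m + 2 := by
      rw [Walk.length_cons, Walk.length_reverse, Walk.length_reverse] at hlen
      omega
    omega

/-- An adjacent pair equidistant from a root gives a short odd cycle: contradiction. -/
lemma C2 {g : ℕ} (hg : G.egirth = (g : ℕ∞)) {z a b : V} {m : ℕ}
    (hadj : G.Adj a b) (hra : G.Reachable z a)
    (hda : G.dist z a = m) (hdb : G.dist z b = m) (hlt : 2 * m + 1 < g) : False := by
  have hrb : G.Reachable z b := hra.trans hadj.reachable
  rcases Nat.eq_zero_or_pos m with hm | hm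
  · have ha0 : a = z := (hra.dist_eq_zero_iff.mp (by omega)).symm
    have hb0 : b = z := (hrb.dist_eq_zero_iff.mp (by omega)).symm
    exact hadj.ne (ha0.trans hb0.symm)
  · obtain ⟨pa, hpa⟩ := hra.exists_walk_length_eq_dist
    obtain ⟨pb, hpb⟩ := hrb.exists_walk_length_eq_dist
    have hbpa : b ∉ pa.support := by
      intro h
      have hle := dist_add_dist_le_of_mem_support pa h
      have h1 : 1 ≤ G.dist b a := dist_pos_of_adj hadj.symm
      have h2 : m ≤ G.dist z b := by omega
      omega
    have hapb : a ∉ pb.support := by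
      intro h
      have hle := dist_add_dist_le_of_mem_support pb h
      have h1 : 1 ≤ G.dist a b := dist_pos_of_adj hadj
      omega
    have he1 : s(a, b) ∉ pa.reverse.edges := by
      intro hmem
      rw [Walk.edges_reverse, List.mem_reverse] at hmem
      exact hbpa (pa.snd_mem_support_of_mem_edges hmem)
    have he2 : s(a, b) ∉ pb.reverse.edges := by
      intro hmem
      rw [Walk.edges_reverse, List.mem_reverse] at hmem
      exact hapb (pb.fst_mem_support_of_mem_edges hmem)
    obtain ⟨w, hw, hlen⟩ := cyc0 hadj pa.reverse pb.reverse he1 he2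
    have hle := egirth_le_of_isCycle hw
    rw [hg] at hle
    have hgle : g ≤ w.length := by exact_mod_cast hle
    rw [Walk.length_reverse, Walk.length_reverse] at hlen
    omega

open Finset in
lemma double_count [Fintype V] [DecidableRel G.Adj] (c : ℕ) (A B : Finset V)
    (h1 : ∀ u ∈ A, c ≤ (B.filter (fun w => G.Adj u w)).card)
    (h2 : ∀ w ∈ B, (A.filter (fun u => G.Adj u w)).card ≤ 1) :
    c * A.card ≤ B.card := by
  calc c * A.card = ∑ _u ∈ A, c := by rw [Finset.sum_const, smul_eq_mul, mul_comm]
    _ ≤ ∑ u ∈ A, (B.filter (fun w => G.Adj u w)).card := Finset.sum_le_sum h1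
    _ = ∑ u ∈ A, ∑ w ∈ B, if G.Adj u w then 1 else 0 :=
        Finset.sum_congr rfl fun u _ => Finset.card_filter _ _
    _ = ∑ w ∈ B, ∑ u ∈ A, if G.Adj u w then 1 else 0 := Finset.sum_comm
    _ = ∑ w ∈ B, (A.filter (fun u => G.Adj u w)).card :=
        Finset.sum_congr rfl fun w _ => (Finset.card_filter _ _).symm
    _ ≤ ∑ _w ∈ B, 1 := Finset.sum_le_sum h2
    _ = B.card := by simp

lemma nbr_count [Fintype V] [DecidableRel G.Adj] {k : ℕ} (hreg : G.IsRegularOfDegree k)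
    (u : V) (B : Finset V) (E : V → Prop) [DecidablePred E]
    (hE : ∀ a b, G.Adj u a → G.Adj u b → E a → E b → a = b)
    (hB : ∀ w, G.Adj u w → ¬ E w → w ∈ B) :
    k - 1 ≤ (B.filter (fun w => G.Adj u w)).card := by
  have hsub : (G.neighborFinset u).filter (fun w => ¬ E w) ⊆
      B.filter (fun w => G.Adj u w) := by
    intro w hw
    rw [Finset.mem_filter, SimpleGraph.mem_neighborFinset] at hw
    exact Finset.mem_filter.mpr ⟨hB w hw.1 hw.2, hw.1⟩
  have hcard1 : ((G.neighborFinset u).filter (fun w => E w)).card ≤ 1 := by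
    rw [Finset.card_le_one]
    intro a ha b hb
    rw [Finset.mem_filter, SimpleGraph.mem_neighborFinset] at ha hb
    exact hE a b ha.1 hb.1 ha.2 hb.2
  have hsplit := Finset.card_filter_add_card_filter_not
    (s := G.neighborFinset u) (p := fun w => E w)
  have hk : (G.neighborFinset u).card = k := hreg u
  have hle := Finset.card_le_card hsub
  omega

open Finset in
lemma odd_growth [Fintype V] [DecidableRel G.Adj] {k g : ℕ} (hreg : G.IsRegularOfDegree k)
    (hg : G.egirth = (g : ℕ∞)) (v : V) (i : ℕ) (hi : 1 ≤ i) (hlt : 2 * i + 2 < g) :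
    (k - 1) * (univ.filter (fun u => G.dist v u = i)).card
      ≤ (univ.filter (fun u => G.dist v u = i + 1)).card := by
  apply double_count (G := G)
  · intro u hu
    rw [Finset.mem_filter] at hu
    have hdu : G.dist v u = i := hu.2
    have hru : G.Reachable v u := Reachable.of_dist_ne_zero (by omega)
    apply nbr_count hreg u _ (fun w => G.dist v w ≤ i)
    · intro a b hua hub hEa hEb
      by_contra hab
      exact C1 hg hua hub hab (hru.trans hua.reachable) (hru.trans hub.reachable)
        hEa hEb (le_of_eq hdu.symm) hlt
    · intro w hw hEw
      rw [Finset.mem_filter]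
      refine ⟨Finset.mem_univ _, ?_⟩
      obtain ⟨p, hp⟩ := hru.exists_walk_length_eq_dist
      have hle : G.dist v w ≤ i + 1 := by
        have := SimpleGraph.dist_le (p.concat hw)
        rw [Walk.length_concat, hp, hdu] at this
        exact this
      simp only [not_le] at hEw
      omega
  · intro w hw
    rw [Finset.mem_filter] at hw
    rw [Finset.card_le_one]
    intro a ha b hb
    simp only [Finset.mem_filter] at ha hb
    by_contra hab
    refine C1 hg ha.2.symm hb.2.symm hab
      (Reachable.of_dist_ne_zero (by rw [ha.1.2]; omega))
      (Reachable.of_dist_ne_zero (by rw [hb.1.2]; omega))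
      (le_of_eq ha.1.2) (le_of_eq hb.1.2) ?_ hlt
    rw [hw.2]
    omega

open Finset in
lemma even_growth [Fintype V] [DecidableRel G.Adj] {k g : ℕ} (hreg : G.IsRegularOfDegree k)
    (hg : G.egirth = (g : ℕ∞)) {x y : V} (hadj : G.Adj x y) (i r : ℕ)
    (hgr : g = 2 * r) (hi : i + 1 ≤ r - 1) :
    (k - 1) * (univ.filter (fun u => G.dist x u = i ∧ G.dist y u = i + 1)).card
      ≤ (univ.filter (fun u => G.dist x u = i + 1 ∧ G.dist y u = i + 2)).card := by
  have hr2 : 2 ≤ r := by omega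
  apply double_count (G := G)
  · intro u hu
    rw [Finset.mem_filter] at hu
    obtain ⟨-, hdxu, hdyu⟩ := hu
    have hryu : G.Reachable y u := Reachable.of_dist_ne_zero (by omega)
    have hrxu : G.Reachable x u := hadj.reachable.trans hryu
    apply nbr_count hreg u _ (fun w => G.dist y w ≤ i)
    · intro c d huc hud hEc hEd
      by_contra hcd
      exact C1 hg huc hud hcd (hryu.trans huc.reachable) (hryu.trans hud.reachable)
        hEc hEd (by rw [hdyu]; omega) (by omega)
    · intro w hw hEw
      simp only [not_le] at hEw
      rw [Finset.mem_filter]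
      refine ⟨Finset.mem_univ _, ?_⟩
      obtain ⟨p, hp⟩ := hryu.exists_walk_length_eq_dist
      have hley : G.dist y w ≤ i + 2 := by
        have := SimpleGraph.dist_le (p.concat hw)
        rw [Walk.length_concat, hp, hdyu] at this
        exact this
      have hney : G.dist y w ≠ i + 1 := by
        intro hcon
        exact C2 hg hw hryu hdyu hcon (by omega)
      have hdyw : G.dist y w = i + 2 := by omega
      obtain ⟨q, hq⟩ := hrxu.exists_walk_length_eq_dist
      have hlex : G.dist x w ≤ i + 1 := by
        have := SimpleGraph.dist_le (q.concat hw)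
        rw [Walk.length_concat, hq, hdxu] at this
        exact this
      have hgex : i + 1 ≤ G.dist x w := by
        have hrxw : G.Reachable x w := hrxu.trans hw.reachable
        obtain ⟨s, hs⟩ := hrxw.exists_walk_length_eq_dist
        have := SimpleGraph.dist_le (Walk.cons hadj.symm s)
        rw [Walk.length_cons, hs] at this
        omega
      exact ⟨by omega, hdyw⟩
  · intro w hw
    rw [Finset.mem_filter] at hw
    obtain ⟨-, hdxw, hdyw⟩ := hw
    rw [Finset.card_le_one]
    intro c hc d hd
    simp only [Finset.mem_filter] at hc hd
    by_contra hcd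
    have hryc : G.Reachable y c := Reachable.of_dist_ne_zero (by rw [hc.1.2.2]; omega)
    have hryd : G.Reachable y d := Reachable.of_dist_ne_zero (by rw [hd.1.2.2]; omega)
    exact C1 hg hc.2.symm hd.2.symm hcd (hadj.reachable.trans hryc)
      (hadj.reachable.trans hryd) (le_of_eq hc.1.2.1) (le_of_eq hd.1.2.1)
      (by rw [hdxw]; omega) (by omega)

open Finset in
lemma odd_final [Fintype V] [DecidableRel G.Adj] {k g t : ℕ} (hreg : G.IsRegularOfDegree k)
    (hg : G.egirth = (g : ℕ∞)) (v : V) (hgt : g = 2 * t + 1) (ht : 1 ≤ t) :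
    1 + k * ∑ j ∈ range t, (k - 1) ^ j ≤ Fintype.card V := by
  set S : ℕ → Finset V := fun i => univ.filter (fun u => G.dist v u = i) with hS
  have hchain : ∀ j, j ≤ t - 1 → k * (k - 1) ^ j ≤ (S (j + 1)).card := by
    intro j
    induction j with
    | zero =>
      intro _
      have hsub : G.neighborFinset v ⊆ S 1 := by
        intro u hu
        rw [SimpleGraph.mem_neighborFinset] at hu
        exact Finset.mem_filter.mpr ⟨Finset.mem_univ _, SimpleGraph.dist_eq_one_iff_adj.mpr hu⟩
      have hcard := Finset.card_le_card hsub
      rw [SimpleGraph.card_neighborFinset_eq_degree, hreg v] at hcard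
      simpa using hcard
    | succ n ih =>
      intro hn
      have h1 := ih (by omega)
      have h2 := odd_growth hreg hg v (n + 1) (by omega) (by omega)
      calc k * (k - 1) ^ (n + 1) = (k - 1) * (k * (k - 1) ^ n) := by ring
        _ ≤ (k - 1) * (S (n + 1)).card := Nat.mul_le_mul_left _ h1
        _ ≤ (S (n + 1 + 1)).card := h2
  have hdisj : ∀ i ∈ range (t + 1), ∀ j ∈ range (t + 1), i ≠ j → Disjoint (S i) (S j) := by
    intro i _ j _ hij
    rw [Finset.disjoint_left]
    intro u hui huj
    simp only [hS, Finset.mem_filter] at hui huj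
    omega
  have hsum : ∑ i ∈ range (t + 1), (S i).card ≤ Fintype.card V := by
    rw [← Finset.card_biUnion hdisj]
    exact Finset.card_le_univ _
  have hS0 : 1 ≤ (S 0).card := by
    refine Finset.card_pos.mpr ⟨v, Finset.mem_filter.mpr ⟨Finset.mem_univ _, ?_⟩⟩
    exact SimpleGraph.dist_self
  have hmul : k * ∑ j ∈ range t, (k - 1) ^ j = ∑ j ∈ range t, k * (k - 1) ^ j :=
    Finset.mul_sum _ _ _
  have hterm : ∑ j ∈ range t, k * (k - 1) ^ j ≤ ∑ j ∈ range t, (S (j + 1)).card :=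
    Finset.sum_le_sum fun j hj => hchain j (by rw [Finset.mem_range] at hj; omega)
  have hsplit : ∑ i ∈ range (t + 1), (S i).card
      = ∑ j ∈ range t, (S (j + 1)).card + (S 0).card := Finset.sum_range_succ' _ _
  omega

open Finset in
lemma even_side [Fintype V] [DecidableRel G.Adj] {k g t : ℕ} (hreg : G.IsRegularOfDegree k)
    (hg : G.egirth = (g : ℕ∞)) {x y : V} (hadj : G.Adj x y) (hgt : g = 2 * t) (ht : 2 ≤ t) :
    ∑ j ∈ range t, (k - 1) ^ j
      ≤ ((range t).biUnion (fun i => univ.filter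
          (fun u => G.dist x u = i ∧ G.dist y u = i + 1))).card := by
  set X : ℕ → Finset V := fun i =>
    univ.filter (fun u => G.dist x u = i ∧ G.dist y u = i + 1) with hX
  have hchain : ∀ j, j ≤ t - 1 → (k - 1) ^ j ≤ (X j).card := by
    intro j
    induction j with
    | zero =>
      intro _
      have hx : x ∈ X 0 := by
        refine Finset.mem_filter.mpr ⟨Finset.mem_univ _, SimpleGraph.dist_self, ?_⟩
        exact SimpleGraph.dist_eq_one_iff_adj.mpr hadj.symm
      have := Finset.card_pos.mpr ⟨x, hx⟩
      simpa using this
    | succ n ih =>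
      intro hn
      have h1 := ih (by omega)
      have h2 := even_growth hreg hg hadj n t hgt (by omega)
      calc (k - 1) ^ (n + 1) = (k - 1) * (k - 1) ^ n := by ring
        _ ≤ (k - 1) * (X n).card := Nat.mul_le_mul_left _ h1
        _ ≤ (X (n + 1)).card := h2
  have hdisj : ∀ i ∈ range t, ∀ j ∈ range t, i ≠ j → Disjoint (X i) (X j) := by
    intro i _ j _ hij
    rw [Finset.disjoint_left]
    intro u hui huj
    simp only [hX, Finset.mem_filter] at hui huj
    omega
  rw [Finset.card_biUnion hdisj]
  exact Finset.sum_le_sum fun j hj => hchain j (by rw [Finset.mem_range] at hj; omega)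

end MooreAux


/-- **Moore bound.** A finite `k`-regular simple graph with `n` vertices and
finite girth `g ≥ 3` satisfies `n ≥ 1 + k·∑_{j=0}^{(g−3)/2} (k−1)^j` if `g` is odd, and
`n ≥ 2·∑_{j=0}^{(g−2)/2} (k−1)^j` if `g` is even. -/
theorem stmt4 {V : Type*} [Fintype V] (G : SimpleGraph V) [DecidableRel G.Adj]
    (k g : ℕ) (hreg : G.IsRegularOfDegree k) (hg3 : 3 ≤ g)
    (hg : G.egirth = (g : ℕ∞)) :
    (Odd g → 1 + k * ∑ j ∈ Finset.range ((g - 3) / 2 + 1), (k - 1) ^ j ≤ Fintype.card V) ∧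
      (Even g → 2 * ∑ j ∈ Finset.range ((g - 2) / 2 + 1), (k - 1) ^ j ≤ Fintype.card V) := by
  classical
  have hgtop : ¬ G.IsAcyclic := by
    intro h
    rw [SimpleGraph.egirth_eq_top.mpr h] at hg
    exact (by simp : (⊤ : ℕ∞) ≠ (g : ℕ∞)) hg
  obtain ⟨a, w, hwc, hwl⟩ := SimpleGraph.exists_egirth_eq_length.mpr hgtop
  constructor
  · intro hodd
    obtain ⟨t, ht⟩ := hodd
    have hrange : (g - 3) / 2 + 1 = t := by omega
    rw [hrange]
    exact MooreAux.odd_final hreg hg a (by omega) (by omega)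
  · intro heven
    obtain ⟨t, ht⟩ := heven
    have hgt : g = 2 * t := by omega
    have ht2 : 2 ≤ t := by omega
    have hnil : ¬ w.Nil := hwc.not_nil
    have hxy : G.Adj a (w.getVert 1) := SimpleGraph.Walk.adj_snd hnil
    have hA := MooreAux.even_side hreg hg hxy hgt ht2
    have hB := MooreAux.even_side hreg hg hxy.symm hgt ht2
    set A := ((Finset.range t).biUnion (fun i => Finset.univ.filter
      (fun u => G.dist a u = i ∧ G.dist (w.getVert 1) u = i + 1))) with hA'
    set B := ((Finset.range t).biUnion (fun i => Finset.univ.filter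
      (fun u => G.dist (w.getVert 1) u = i ∧ G.dist a u = i + 1))) with hB'
    have hdisjAB : Disjoint A B := by
      rw [Finset.disjoint_left]
      intro u hu hv
      simp only [hA', hB', Finset.mem_biUnion, Finset.mem_filter, Finset.mem_range] at hu hv
      obtain ⟨i, -, -, hi1, hi2⟩ := hu
      obtain ⟨j, -, -, hj1, hj2⟩ := hv
      omega
    have hcard : A.card + B.card ≤ Fintype.card V := by
      rw [← Finset.card_union_of_disjoint hdisjAB]
      exact Finset.card_le_univ _
    have hrange : (g - 2) / 2 + 1 = t := by omega
    rw [hrange]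
    omega
end

section
/- If (a, b, c) with a ≤ b ≤ c is the signature of a cubic girth-regular graph of finite girth, then a + b + c is even. -/
open SimpleGraph

/-- For a cubic girth-regular graph of finite girth with signature (a, b, c), the sum a + b + c is even. -/
theorem stmt5 {V : Type*} [Fintype V] (G : SimpleGraph V) [DecidableRel G.Adj]
    (g : ℕ) (hreg : G.IsRegularOfDegree 3) (hg : G.egirth = (g : ℕ∞))
    (a b c : ℕ) (hab : a ≤ b) (hbc : b ≤ c)
    (hsig : ∀ v : V, vertexSignature G g v = {a, b, c}) :
    Even (a + b + c) := by
  classical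
  -- V is nonempty since G has a cycle
  have hnac : ¬ G.IsAcyclic := by
    intro h
    rw [h.egirth_eq_top] at hg
    exact (ENat.top_ne_coe g) hg
  obtain ⟨v, -, -, -⟩ := (exists_egirth_eq_length (G := G)).mpr hnac
  -- the finset of girth cycle edge sets
  have hfin : {s : Set (Sym2 V) | IsGirthCycleEdgeSet G g s}.Finite := Set.toFinite _
  set T : Finset (Set (Sym2 V)) := hfin.toFinset with hT
  set N : Finset V := (G.neighborSet v).toFinite.toFinset with hN
  have key : (vertexSignature G g v).sum =
      ∑ u ∈ N, girthCycleCount G g s(v, u) := rfl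
  have h1 : a + b + c = ∑ u ∈ N, girthCycleCount G g s(v, u) := by
    rw [← key, hsig v]; simp [Multiset.sum_cons]; ring
  rw [h1]
  have h2 : ∀ e : Sym2 V, girthCycleCount G g e = (T.filter (fun s => e ∈ s)).card := by
    intro e
    rw [girthCycleCount, ← Set.ncard_coe_finset]
    congr 1
    ext s
    simp [hT, and_comm]
  simp_rw [h2]
  have swap : ∑ u ∈ N, (T.filter (fun s => s(v, u) ∈ s)).card
      = ∑ s ∈ T, (N.filter (fun u => s(v, u) ∈ s)).card := by
    simp_rw [Finset.card_filter]
    exact Finset.sum_comm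
  rw [swap]
  apply Finset.even_sum
  intro s hs
  rw [hT, Set.Finite.mem_toFinset] at hs
  obtain ⟨u, w, hcyc, hlen, rfl⟩ := hs
  -- the filtered neighbors correspond to edges of w containing v
  have hcard : (N.filter (fun x => s(v, x) ∈ ({e | e ∈ w.edges} : Set (Sym2 V)))).card
      = (w.edges.countP (fun e => v ∈ e)) := by
    rw [List.countP_eq_length_filter, ← List.toFinset_card_of_nodup
      (hcyc.edges_nodup.filter _)]
    apply Finset.card_bij (fun x _ => s(v, x))
    · intro x hx
      rw [Finset.mem_filter, hN, Set.Finite.mem_toFinset] at hx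
      simp only [List.mem_toFinset, List.mem_filter]
      refine ⟨by simpa using hx.2, by simp⟩
    · intro x hx y hy h
      exact Sym2.congr_right.mp h
    · intro e he
      simp only [List.mem_toFinset, List.mem_filter, decide_eq_true_eq] at he
      obtain ⟨he1, he2⟩ := he
      obtain ⟨x, rfl⟩ := Sym2.mem_iff_exists.mp he2
      refine ⟨x, ?_, rfl⟩
      rw [Finset.mem_filter, hN, Set.Finite.mem_toFinset]
      exact ⟨w.edges_subset_edgeSet he1, by simpa using he1⟩
  rw [Finset.filter_congr_decidable] at hcard
  rw [Finset.filter_congr_decidable, hcard]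
  exact (hcyc.isTrail.even_countP_edges_iff v).mpr (fun h => absurd rfl h)
end

section
/- If (a, b, c) with a ≤ b ≤ c is the signature of a cubic girth-regular graph of finite girth, then a + b ≥ c. -/
open SimpleGraph

/-!
A girth cycle through the edge `vu` leaves `v` along a second edge `vx` with `x ≠ u`. Hence
`ε(vu)` is at most the sum of `ε(vx)` over the other neighbours `x` of `v`, i.e. every entry of
the signature at `v` is at most half the sum of all entries. For the entry `c` this is
`2c ≤ a + b + c`.
-/

section

variable {V : Type*}

theorem SimpleGraph.Walk.IsCycle.exists_ne_mem_edges {G : SimpleGraph V} {t v u : V}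
    {p : G.Walk t t} (hp : p.IsCycle) (h : s(v, u) ∈ p.edges) :
    ∃ x ≠ u, s(v, x) ∈ p.edges := by
  have htwo := hp.ncard_neighborSet_toSubgraph_eq_two (p.fst_mem_support_of_mem_edges h)
  by_contra! hx
  have hsub : p.toSubgraph.neighborSet v ⊆ {u} := fun x hx' =>
    by_contra fun hxu => hx x hxu (Walk.adj_toSubgraph_iff_mem_edges.mp hx')
  have := Set.ncard_le_ncard hsub
  simp only [Set.ncard_singleton] at this
  omega

theorem girthCycleCount_le_sum_erase [Finite V] [DecidableEq V] (G : SimpleGraph V)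
    [G.LocallyFinite] (g : ℕ) (v u : V) :
    girthCycleCount G g s(v, u) ≤
      ∑ x ∈ (G.neighborFinset v).erase u, girthCycleCount G g s(v, x) := by
  have hsub : {s | IsGirthCycleEdgeSet G g s ∧ s(v, u) ∈ s} ⊆
      ⋃ x ∈ (G.neighborFinset v).erase u, {s | IsGirthCycleEdgeSet G g s ∧ s(v, x) ∈ s} := by
    rintro s ⟨⟨t, p, hp, hlen, rfl⟩, he⟩
    obtain ⟨x, hxu, hx⟩ := hp.exists_ne_mem_edges he
    have hadj : G.Adj v x := p.adj_of_mem_edges hx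
    exact Set.mem_biUnion (by simpa [hxu] using hadj) ⟨⟨t, p, hp, hlen, rfl⟩, hx⟩
  exact (Set.ncard_le_ncard hsub (Set.toFinite _)).trans (Finset.set_ncard_biUnion_le _ _)

theorem two_mul_le_sum_vertexSignature [Fintype V] (G : SimpleGraph V) (g : ℕ) {v : V}
    {n : ℕ} (hn : n ∈ vertexSignature G g v) : 2 * n ≤ (vertexSignature G g v).sum := by
  classical
  have hsig : vertexSignature G g v =
      (G.neighborFinset v).val.map fun x => girthCycleCount G g s(v, x) := by
    unfold vertexSignature
    congr
    ext x
    simp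
  rw [hsig] at hn ⊢
  obtain ⟨u, hu, rfl⟩ := Multiset.mem_map.mp hn
  rw [← Finset.sum_eq_multiset_sum, ← Finset.add_sum_erase _ _ hu]
  have := girthCycleCount_le_sum_erase G g v u
  omega

end

theorem stmt6_general {V : Type*} [Fintype V] (G : SimpleGraph V)
    (g : ℕ) (hg : G.egirth = (g : ℕ∞))
    (a b c : ℕ)
    (hsig : ∀ v : V, vertexSignature G g v = {a, b, c}) :
    c ≤ a + b := by
  have hcyclic : ¬ G.IsAcyclic := by
    rw [← egirth_eq_top, hg]
    exact WithTop.natCast_ne_top g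
  obtain ⟨v, -, -⟩ := exists_egirth_eq_length.mpr hcyclic
  have := two_mul_le_sum_vertexSignature G g (v := v) (n := c) (by simp [hsig v])
  simp only [hsig v, Multiset.insert_eq_cons, Multiset.sum_cons, Multiset.sum_singleton] at this
  omega

/-- For a cubic girth-regular graph of finite girth with signature (a, b, c), we have a + b ≥ c. -/
theorem stmt6 {V : Type*} [Fintype V] (G : SimpleGraph V) [DecidableRel G.Adj]
    (g : ℕ) (hreg : G.IsRegularOfDegree 3) (hg : G.egirth = (g : ℕ∞))
    (a b c : ℕ) (hab : a ≤ b) (hbc : b ≤ c)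
    (hsig : ∀ v : V, vertexSignature G g v = {a, b, c}) :
    c ≤ a + b :=
  stmt6_general G g hg a b c hsig
end

section
/- Let (a, b, c) with a ≤ b ≤ c be the signature of a cubic girth-regular graph Γ of finite girth g. If a ≥ 1 and c = a + b, then g is even. -/
/-!
At a vertex `v` with neighbours `x, y, t`, write `p_xy` for the number of girth cycles through
both `vx` and `vy`, and similarly `p_xt`, `p_yt`. A cycle through `v` uses exactly two of its
edges, so `ε(vx) = p_xy + p_xt`, `ε(vy) = p_xy + p_yt`, `ε(vt) = p_xt + p_yt`. Summing,
`2c = a + b + c = 2 (p_xy + p_xt + p_yt)`. If a girth cycle passes through `vx` and `vy`, then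
`p_xy ≥ 1`, so `ε(vt) < c`; and `ε(vx) = ε(vy) = c` would force `ε(vt) = 0 < a`. Hence along a
girth cycle exactly one of any two consecutive edges lies on `c` girth cycles, so the edges of
the cycle alternate and its length `g` is even.
-/

open SimpleGraph

lemma Finset.exists_eq_insert_pair_of_card_eq_three {α : Type*} [DecidableEq α] {s : Finset α}
    {x y : α} (hs : s.card = 3) (hx : x ∈ s) (hy : y ∈ s) (hxy : x ≠ y) :
    ∃ z, x ≠ z ∧ y ≠ z ∧ s = {x, y, z} := by
  have hsub : {x, y} ⊆ s := by simp [Finset.insert_subset_iff, hx, hy]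
  obtain ⟨z, hz⟩ := Finset.card_eq_one.mp
    (by rw [Finset.card_sdiff_of_subset hsub, hs, Finset.card_pair hxy] : (s \ {x, y}).card = 1)
  have hzs : z ∈ s \ {x, y} := hz ▸ Finset.mem_singleton_self z
  simp only [Finset.mem_sdiff, Finset.mem_insert, Finset.mem_singleton, not_or] at hzs
  refine ⟨z, Ne.symm hzs.2.1, Ne.symm hzs.2.2, ?_⟩
  rw [← Finset.sdiff_union_of_subset hsub, hz]
  ext
  simp only [Finset.mem_union, Finset.mem_insert, Finset.mem_singleton]
  tauto

lemma add_eq_iff_add_ne_of_multiset_eq {p q r a b : ℕ}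
    (h : ({p + q, p + r, q + r} : Multiset ℕ) = {a, b, a + b}) (ha : 1 ≤ a) (hab : a ≤ b)
    (hp : 1 ≤ p) : p + q = a + b ↔ p + r ≠ a + b := by
  have hsum := congrArg Multiset.sum h
  have hqr : q + r ∈ ({a, b, a + b} : Multiset ℕ) := h ▸ by simp
  have hmax : a + b ∈ ({p + q, p + r, q + r} : Multiset ℕ) := h ▸ by simp
  simp only [Multiset.insert_eq_cons, Multiset.sum_cons, Multiset.sum_singleton,
    Multiset.mem_cons, Multiset.mem_singleton] at hsum hqr hmax
  omega

lemma Nat.even_of_alternating {n : ℕ} {Q : ℕ → Prop} (hn : 0 < n)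
    (hstep : ∀ i, i + 1 < n → (Q (i + 1) ↔ ¬Q i)) (hwrap : Q 0 ↔ ¬Q (n - 1)) : Even n := by
  have key : ∀ i < n, (Q i ↔ (Even i ↔ Q 0)) := by
    intro i
    induction i with
    | zero => simp
    | succ i ih => intro hi; rw [hstep i hi, ih (by omega), Nat.even_add_one]; tauto
  by_contra hodd
  obtain ⟨k, rfl⟩ := Nat.not_even_iff_odd.mp hodd
  have := key (2 * k) (by omega)
  simp only [add_tsub_cancel_right, even_two_mul, true_iff] at this hwrap
  tauto

namespace SimpleGraph

variable {V : Type*} {G : SimpleGraph V}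

lemma Walk.IsCycle.exists_other_mem_edges {u v x : V} {p : G.Walk u u} (hp : p.IsCycle)
    (hx : s(v, x) ∈ p.edges) :
    ∃ y, y ≠ x ∧ s(v, y) ∈ p.edges ∧ ∀ z, s(v, z) ∈ p.edges → z = x ∨ z = y := by
  obtain ⟨a, b, hab, hN⟩ := Set.ncard_eq_two.mp
    (hp.ncard_neighborSet_toSubgraph_eq_two (p.fst_mem_support_of_mem_edges hx))
  have hmem : ∀ z, s(v, z) ∈ p.edges ↔ z = a ∨ z = b := fun z => by
    rw [← Walk.adj_toSubgraph_iff_mem_edges, ← Subgraph.mem_neighborSet, hN]; simp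
  rcases (hmem x).1 hx with rfl | rfl
  · exact ⟨b, hab.symm, (hmem b).2 (Or.inr rfl), fun z hz => (hmem z).1 hz⟩
  · exact ⟨a, hab, (hmem a).2 (Or.inl rfl), fun z hz => ((hmem z).1 hz).symm⟩

lemma Walk.IsCycle.even_length_of_alternating {u : V} {p : G.Walk u u} (hp : p.IsCycle)
    (P : Sym2 V → Prop)
    (hP : ∀ ⦃v x y⦄, s(v, x) ∈ p.edges → s(v, y) ∈ p.edges → x ≠ y → (P s(v, x) ↔ ¬P s(v, y))) :
    Even p.length := by
  have hlen := hp.three_le_length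
  have hedge : ∀ i < p.length, s(p.getVert i, p.getVert (i + 1)) ∈ p.edges := fun i hi =>
    Walk.adj_toSubgraph_iff_mem_edges.mp (p.toSubgraph_adj_getVert hi)
  refine Nat.even_of_alternating (Q := fun i => P s(p.getVert i, p.getVert (i + 1))) (by omega)
    (fun i hi => ?_) ?_
  · rw [Sym2.eq_swap (a := p.getVert i)]
    exact hP (hedge (i + 1) hi) (Sym2.eq_swap ▸ hedge i (by omega))
      (hp.getVert_sub_one_ne_getVert_add_one (i := i + 1) (by omega)).symm
  · have hsucc : p.length - 1 + 1 = p.length := by omega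
    have hlast := hedge (p.length - 1) (by omega)
    rw [hsucc, p.getVert_length, Sym2.eq_swap] at hlast
    simp only [hsucc, p.getVert_zero, p.getVert_length, zero_add]
    rw [Sym2.eq_swap (a := p.getVert (p.length - 1))]
    exact hP (by simpa using hedge 0 (by omega)) hlast hp.snd_ne_penultimate

variable (G) in
noncomputable def girthCyclePairCount (g : ℕ) (e f : Sym2 V) : ℕ :=
  Set.ncard {s : Set (Sym2 V) | IsGirthCycleEdgeSet G g s ∧ e ∈ s ∧ f ∈ s}

lemma girthCyclePairCount_comm (g : ℕ) (e f : Sym2 V) :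
    girthCyclePairCount G g e f = girthCyclePairCount G g f e := by
  unfold girthCyclePairCount
  congr 1
  ext s
  exact and_congr_right' and_comm

lemma girthCycleCount_eq_add [Finite V] {g : ℕ} {v x y z : V}
    (hnb : ∀ w, G.Adj v w ↔ w = x ∨ w = y ∨ w = z) (hxy : x ≠ y) (hxz : x ≠ z) (hyz : y ≠ z) :
    girthCycleCount G g s(v, x) =
      girthCyclePairCount G g s(v, x) s(v, y) + girthCyclePairCount G g s(v, x) s(v, z) := by
  rw [girthCycleCount, girthCyclePairCount, girthCyclePairCount, ← Set.ncard_union_eq ?disj]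
  case disj =>
    rw [Set.disjoint_left]
    rintro s ⟨⟨u, w, hw, -, rfl⟩, hx, hy⟩ ⟨-, -, hz⟩
    obtain ⟨t, -, -, hmem⟩ := hw.exists_other_mem_edges hx
    grind
  congr 1
  ext s
  simp only [Set.mem_ofPred_eq, Set.mem_union]
  constructor
  · rintro ⟨⟨u, w, hw, hlen, rfl⟩, hx⟩
    obtain ⟨t, htx, ht, -⟩ := hw.exists_other_mem_edges hx
    rcases (hnb t).1 (w.adj_of_mem_edges ht) with rfl | rfl | rfl
    · exact absurd rfl htx
    · exact Or.inl ⟨⟨u, w, hw, hlen, rfl⟩, hx, ht⟩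
    · exact Or.inr ⟨⟨u, w, hw, hlen, rfl⟩, hx, ht⟩
  · rintro (⟨hs, hx, -⟩ | ⟨hs, hx, -⟩) <;> exact ⟨hs, hx⟩

lemma vertexSignature_eq_map [Fintype V] [DecidableRel G.Adj] (g : ℕ) (v : V) :
    vertexSignature G g v = (G.neighborFinset v).val.map fun u => girthCycleCount G g s(v, u) := by
  rw [vertexSignature, Set.toFinite_toFinset, neighborFinset_def]

lemma girthCycleCount_eq_add_iff [Fintype V] [DecidableRel G.Adj] {g a b : ℕ} {v x y : V}
    (hdeg : G.degree v = 3) (hsig : vertexSignature G g v = {a, b, a + b}) (ha : 1 ≤ a)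
    (hab : a ≤ b) {s : Set (Sym2 V)} (hs : IsGirthCycleEdgeSet G g s) (hx : s(v, x) ∈ s)
    (hy : s(v, y) ∈ s) (hxy : x ≠ y) :
    girthCycleCount G g s(v, x) = a + b ↔ girthCycleCount G g s(v, y) ≠ a + b := by
  classical
  have hadj : ∀ ⦃z⦄, s(v, z) ∈ s → z ∈ G.neighborFinset v := fun z hz => by
    obtain ⟨u, w, -, -, rfl⟩ := hs
    exact (mem_neighborFinset G v z).2 (w.adj_of_mem_edges hz)
  obtain ⟨t, hxt, hyt, hN⟩ := Finset.exists_eq_insert_pair_of_card_eq_three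
    ((card_neighborFinset_eq_degree G v).trans hdeg) (hadj hx) (hadj hy) hxy
  have hnb : ∀ w, G.Adj v w ↔ w = x ∨ w = y ∨ w = t := fun w => by
    rw [← mem_neighborFinset, hN]; simp
  have hpos : 1 ≤ girthCyclePairCount G g s(v, x) s(v, y) :=
    (Set.ncard_pos (Set.toFinite _)).2 ⟨s, hs, hx, hy⟩
  rw [vertexSignature_eq_map, hN] at hsig
  simp only [Finset.insert_val, Finset.singleton_val, Multiset.mem_singleton, Multiset.mem_cons,
    Multiset.ndinsert_of_notMem, hxy, hxt, hyt, or_self, not_false_eq_true, Multiset.map_cons,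
    Multiset.map_singleton, Multiset.insert_eq_cons] at hsig
  rw [girthCycleCount_eq_add (x := t) (y := x) (z := y) (fun w => by rw [hnb]; tauto) hxt.symm hyt.symm hxy,
    girthCyclePairCount_comm (e := s(v, t)), girthCyclePairCount_comm (e := s(v, t))] at hsig
  rw [girthCycleCount_eq_add hnb hxy hxt hyt,
    girthCycleCount_eq_add (x := y) (y := x) (z := t) (fun w => by rw [hnb]; tauto) hxy.symm hyt hxt,
    girthCyclePairCount_comm (e := s(v, y)) (f := s(v, x))] at hsig ⊢
  exact add_eq_iff_add_ne_of_multiset_eq hsig ha hab hpos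

end SimpleGraph

theorem stmt7_general {V : Type*} [Fintype V] (G : SimpleGraph V) [DecidableRel G.Adj]
    (g : ℕ) (hreg : G.IsRegularOfDegree 3) (hg : G.egirth = (g : ℕ∞))
    (a b c : ℕ) (hab : a ≤ b)
    (hsig : ∀ v : V, vertexSignature G g v = {a, b, c})
    (ha : 1 ≤ a) (hcab : c = a + b) :
    Even g := by
  subst hcab
  have hcyclic : ¬G.IsAcyclic := fun h => by simp [egirth_eq_top.mpr h] at hg
  obtain ⟨u, w, hw, hlen⟩ := exists_egirth_eq_length.mpr hcyclic
  have hwg : w.length = g := by exact_mod_cast hlen.symm.trans hg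
  rw [← hwg]
  exact hw.even_length_of_alternating (fun e => girthCycleCount G g e = a + b)
    fun v x y hx hy hxy => girthCycleCount_eq_add_iff (hreg v) (hsig v) ha hab
      ⟨u, w, hw, hwg, rfl⟩ hx hy hxy

/-- If a cubic girth-regular graph of finite girth g has signature (a, b, c) with a ≥ 1 and c = a + b, then g is even. -/
theorem stmt7 {V : Type*} [Fintype V] (G : SimpleGraph V) [DecidableRel G.Adj]
    (g : ℕ) (hreg : G.IsRegularOfDegree 3) (hg : G.egirth = (g : ℕ∞))
    (a b c : ℕ) (hab : a ≤ b) (hbc : b ≤ c)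
    (hsig : ∀ v : V, vertexSignature G g v = {a, b, c})
    (ha : 1 ≤ a) (hcab : c = a + b) :
    Even g :=
  stmt7_general G g hreg hg a b c hab hsig ha hcab
end

section
/- If the signature of a cubic girth-regular graph of finite girth is (0, b, c) with b ≤ c (i.e., some edge at each vertex lies on no girth cycle), then b = c = 1. -/
/-!
A girth cycle through a vertex `v` uses two of the three edges at `v`, and neither can be the
edge lying on no girth cycle. So the union `H` of all girth cycles has maximum degree two, and a
cycle of `H` then contains every edge of `H` at each of its vertices; hence it is a whole
connected component of `H`. Two girth cycles sharing an edge therefore coincide, every edge of a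
girth cycle lies on exactly one of them, and at a vertex of a girth cycle (one exists because the
girth is finite) the signature contains `1` twice.
-/

open SimpleGraph

namespace SimpleGraph.Walk.IsCycle

variable {V : Type*} {G : SimpleGraph V} {u x y : V} {c : G.Walk u u}

theorem mem_edges_of_adj (hdeg : ∀ v, (G.neighborSet v).encard ≤ 2) (hc : c.IsCycle)
    (hx : x ∈ c.support) (hxy : G.Adj x y) : s(x, y) ∈ c.edges := by
  have hfin := c.finite_neighborSet_toSubgraph (w := x)
  have heq : c.toSubgraph.neighborSet x = G.neighborSet x := by
    refine hfin.eq_of_subset_of_encard_le (fun _ h => c.toSubgraph.adj_sub h) ?_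
    rw [← hfin.cast_ncard_eq, hc.ncard_neighborSet_toSubgraph_eq_two hx]
    exact hdeg x
  rw [← c.mem_edges_toSubgraph, Subgraph.mem_edgeSet]
  exact (heq ▸ hxy : y ∈ c.toSubgraph.neighborSet x)

theorem mem_support_of_reachable (hdeg : ∀ v, (G.neighborSet v).encard ≤ 2) (hc : c.IsCycle)
    (hx : x ∈ c.support) (hxy : G.Reachable x y) : y ∈ c.support := by
  obtain ⟨p⟩ := hxy
  induction p with
  | nil => exact hx
  | cons h _ ih => exact ih (c.snd_mem_support_of_mem_edges (hc.mem_edges_of_adj hdeg hx h))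

theorem edges_subset_of_mem_support (hdeg : ∀ v, (G.neighborSet v).encard ≤ 2)
    (hc : c.IsCycle) {a b : V} (p : G.Walk a b) (hxc : x ∈ c.support) (hxp : x ∈ p.support) :
    p.edges ⊆ c.edges := by
  classical
  intro e he
  induction e using Sym2.ind with
  | _ y z =>
  have hy : y ∈ c.support := by
    refine hc.mem_support_of_reachable hdeg hxc ?_
    exact ((p.takeUntil x hxp).reachable.symm.trans
      (p.takeUntil y (p.fst_mem_support_of_mem_edges he)).reachable)
  exact hc.mem_edges_of_adj hdeg hy (p.adj_of_mem_edges he)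

end SimpleGraph.Walk.IsCycle

section GirthCycles

variable {V : Type*} {G : SimpleGraph V} {g : ℕ}

def girthCycleGraph (G : SimpleGraph V) (g : ℕ) : SimpleGraph V :=
  fromEdgeSet {e | ∃ S, IsGirthCycleEdgeSet G g S ∧ e ∈ S}

theorem girthCycleGraph_le : girthCycleGraph G g ≤ G := by
  rintro x y ⟨⟨_, ⟨_, w, -, -, rfl⟩, he⟩, -⟩
  exact w.adj_of_mem_edges he

theorem edges_subset_edgeSet_girthCycleGraph {u : V} {w : G.Walk u u} (hl : w.length = g)
    (hw : w.IsCycle) :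
    ∀ e ∈ w.edges, e ∈ (girthCycleGraph G g).edgeSet := fun e he => by
  rw [girthCycleGraph, edgeSet_fromEdgeSet]
  exact ⟨⟨_, ⟨u, w, hw, hl, rfl⟩, he⟩,
    G.not_isDiag_of_mem_edgeSet (w.edges_subset_edgeSet he)⟩

theorem girthCycleCount_pos_of_adj [Finite V] {x y : V} (h : (girthCycleGraph G g).Adj x y) :
    0 < girthCycleCount G g s(x, y) :=
  (Set.ncard_pos).mpr h.1

theorem encard_neighborSet_girthCycleGraph_le_two [Fintype V] [DecidableRel G.Adj]
    (hreg : G.IsRegularOfDegree 3)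
    (hzero : ∀ v, ∃ u, G.Adj v u ∧ girthCycleCount G g s(v, u) = 0) (v : V) :
    ((girthCycleGraph G g).neighborSet v).encard ≤ 2 := by
  classical
  obtain ⟨u₀, hu₀, h₀⟩ := hzero v
  have hsub : (girthCycleGraph G g).neighborSet v ⊆ ↑((G.neighborFinset v).erase u₀) := by
    intro u hu
    have hne : u ≠ u₀ := by
      rintro rfl
      exact (girthCycleCount_pos_of_adj hu).ne' h₀
    simpa [hne] using girthCycleGraph_le hu
  calc ((girthCycleGraph G g).neighborSet v).encard
      ≤ (((G.neighborFinset v).erase u₀ : Finset V) : Set V).encard := Set.encard_le_encard hsub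
    _ = 2 := by
      rw [Set.encard_coe_eq_coe_finsetCard, Finset.card_erase_of_mem (by simpa),
        card_neighborFinset_eq_degree, hreg v]
      rfl

theorem girthCycle_edges_subset_of_mem_support
    (hdeg : ∀ v, ((girthCycleGraph G g).neighborSet v).encard ≤ 2)
    {u u' x : V} {w : G.Walk u u} {w' : G.Walk u' u'} (hw : w.IsCycle) (hl : w.length = g)
    (hw' : w'.IsCycle) (hl' : w'.length = g) (hx : x ∈ w.support) (hx' : x ∈ w'.support) :
    w'.edges ⊆ w.edges := by
  have hH := edges_subset_edgeSet_girthCycleGraph hl hw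
  have hH' := edges_subset_edgeSet_girthCycleGraph hl' hw'
  simpa using (hw.transfer hH).edges_subset_of_mem_support hdeg (w'.transfer _ hH')
    (by simpa using hx) (by simpa using hx')

theorem girthCycleCount_eq_one [Finite V]
    (hdeg : ∀ v, ((girthCycleGraph G g).neighborSet v).encard ≤ 2)
    {u : V} {w : G.Walk u u} (hw : w.IsCycle) (hl : w.length = g) {e : Sym2 V}
    (he : e ∈ w.edges) : girthCycleCount G g e = 1 := by
  rw [girthCycleCount, Set.ncard_eq_one]
  refine ⟨{e | e ∈ w.edges}, Set.ext fun S => ⟨?_, ?_⟩⟩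
  · rintro ⟨⟨u', w', hw', hl', rfl⟩, he'⟩
    induction e using Sym2.ind with
    | _ x y =>
    have hx := w.fst_mem_support_of_mem_edges he
    have hx' := w'.fst_mem_support_of_mem_edges he'
    exact Set.ext fun f =>
      ⟨fun hf => girthCycle_edges_subset_of_mem_support hdeg hw hl hw' hl' hx hx' hf,
        fun hf => girthCycle_edges_subset_of_mem_support hdeg hw' hl' hw hl hx' hx hf⟩
  · rintro rfl
    exact ⟨⟨u, w, hw, hl, rfl⟩, he⟩

end GirthCycles

section Signature

variable {V : Type*} [Fintype V] {G : SimpleGraph V} {g : ℕ}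

theorem mem_vertexSignature {v : V} {n : ℕ} :
    n ∈ vertexSignature G g v ↔ ∃ u, G.Adj v u ∧ girthCycleCount G g s(v, u) = n := by
  simp [vertexSignature]

theorem two_le_count_vertexSignature {v x y : V} {n : ℕ} (hxy : x ≠ y) (hx : G.Adj v x)
    (hy : G.Adj v y) (hnx : girthCycleCount G g s(v, x) = n)
    (hny : girthCycleCount G g s(v, y) = n) : 2 ≤ (vertexSignature G g v).count n := by
  classical
  have hsub : ({x, y} : Finset V) ⊆
      (G.neighborSet v).toFinite.toFinset.filter fun u => n = girthCycleCount G g s(v, u) := by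
    simp [Finset.insert_subset_iff, hx, hy, hnx, hny]
  calc 2 = ({x, y} : Finset V).card := (Finset.card_pair hxy).symm
    _ ≤ _ := Finset.card_le_card hsub
    _ = (vertexSignature G g v).count n := by rw [vertexSignature, Multiset.count_map]; rfl

end Signature

theorem exists_isCycle_length_eq_of_egirth_eq {V : Type*} {G : SimpleGraph V} {g : ℕ}
    (hg : G.egirth = g) : ∃ (a : V) (w : G.Walk a a), w.IsCycle ∧ w.length = g := by
  have hG : ¬ G.IsAcyclic := fun h => by simp [h.egirth_eq_top] at hg
  obtain ⟨a, w, hw, hl⟩ := exists_egirth_eq_length.mpr hG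
  exact ⟨a, w, hw, by exact_mod_cast hl ▸ hg⟩

theorem eq_one_of_two_le_count_one {b c : ℕ} (h : 2 ≤ ({0, b, c} : Multiset ℕ).count 1) :
    b = 1 ∧ c = 1 := by
  grind [Multiset.insert_eq_cons, Multiset.count_cons, Multiset.count_singleton]

theorem stmt8_general {V : Type*} [Fintype V] (G : SimpleGraph V) [DecidableRel G.Adj]
    (g : ℕ) (hreg : G.IsRegularOfDegree 3) (hg : G.egirth = (g : ℕ∞))
    (b c : ℕ)
    (hsig : ∀ v : V, vertexSignature G g v = {0, b, c}) :
    b = 1 ∧ c = 1 := by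
  have hzero (v : V) : ∃ u, G.Adj v u ∧ girthCycleCount G g s(v, u) = 0 :=
    mem_vertexSignature.mp (by simp [hsig v])
  have hdeg := encard_neighborSet_girthCycleGraph_le_two hreg hzero
  obtain ⟨a, w, hw, hl⟩ := exists_isCycle_length_eq_of_egirth_eq hg
  have hsnd := w.mk_start_snd_mem_edges hw.not_nil
  have hpen : s(a, w.penultimate) ∈ w.edges :=
    Sym2.eq_swap ▸ w.mk_penultimate_end_mem_edges hw.not_nil
  have hcount := two_le_count_vertexSignature hw.snd_ne_penultimate
    (w.adj_of_mem_edges hsnd) (w.adj_of_mem_edges hpen)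
    (girthCycleCount_eq_one hdeg hw hl hsnd) (girthCycleCount_eq_one hdeg hw hl hpen)
  exact eq_one_of_two_le_count_one (hsig a ▸ hcount)

/-- If a cubic girth-regular graph of finite girth has signature
`(0, b, c)` with `b ≤ c`, then `b = c = 1`. -/
theorem stmt8 {V : Type*} [Fintype V] (G : SimpleGraph V) [DecidableRel G.Adj]
    (g : ℕ) (hreg : G.IsRegularOfDegree 3) (hg : G.egirth = (g : ℕ∞))
    (b c : ℕ) (hbc : b ≤ c)
    (hsig : ∀ v : V, vertexSignature G g v = {0, b, c}) :
    b = 1 ∧ c = 1 :=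
  stmt8_general G g hreg hg b c hsig
end

section
/- Let Γ be a finite cubic (3-regular) simple graph of finite girth g ≥ 3, and let d = ⌊g/2⌋. Then every path u–v–w of length 2 in Γ lies on at most 2^{d−1} girth cycles of Γ. -/
open SimpleGraph

/-!
Orient a girth cycle through `u–v–w` as a closed walk `u, v, w, x₃, …, x_{g-1}, u`. When all
degrees are at most 3, the vertex `x_{i+2}` is one of at most two neighbours of `x_{i+1}` other
than `x_i`, so one bit per step records `x₃, …, x_{d+1}`, where `d = ⌊g/2⌋`: `d - 1` bits in all.
Two girth cycles with the same bits agree up to `x_{d+1}`. What remains of each is a path from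
`x_{d+1}` to `u` of length `g - d - 1`. If these two paths differed, they would contain a cycle
of length at most `2 (g - d - 1) < g`.
-/

theorem Finset.exists_injOn_bool_of_card_le_two {α : Type*} {s : Finset α} (hs : s.card ≤ 2) :
    ∃ f : α → Bool, Set.InjOn f s := by
  classical
  obtain rfl | ⟨a, ha⟩ := s.eq_empty_or_nonempty
  · exact ⟨fun _ => true, by simp⟩
  have hrest : (s.erase a).card ≤ 1 := by rw [Finset.card_erase_of_mem ha]; omega
  refine ⟨fun x => decide (x = a), fun x hx y hy hxy => ?_⟩
  by_cases hxa : x = a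
  · simp_all
  · have hya : y ≠ a := by simpa [hxa] using hxy
    exact Finset.card_le_one_iff.mp hrest (Finset.mem_erase.mpr ⟨hxa, hx⟩)
      (Finset.mem_erase.mpr ⟨hya, hy⟩)

namespace SimpleGraph

variable {V : Type*} {G : SimpleGraph V}

theorem exists_injOn_bool_of_degree_le_three [G.LocallyFinite]
    (hdeg : ∀ v, G.degree v ≤ 3) :
    ∃ f : V → V → V → Bool, ∀ p c, G.Adj c p → Set.InjOn (f p c) {y | G.Adj c y ∧ y ≠ p} := by
  classical
  have key : ∀ p c, ∃ f : V → Bool, G.Adj c p → Set.InjOn f {y | G.Adj c y ∧ y ≠ p} := by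
    intro p c
    by_cases hcp : G.Adj c p
    · have hcard : ((G.neighborFinset c).erase p).card ≤ 2 := by
        rw [Finset.card_erase_of_mem (by simpa using hcp), card_neighborFinset_eq_degree]
        have := hdeg c
        omega
      obtain ⟨f, hf⟩ := Finset.exists_injOn_bool_of_card_le_two hcard
      refine ⟨f, fun _ => hf.mono fun y hy => ?_⟩
      simpa [and_comm] using hy
    · exact ⟨fun _ => true, fun h => absurd h hcp⟩
  choose f hf using key
  exact ⟨f, hf⟩

namespace Walk

variable {u v w : V}

theorem edges_eq_cons_tail {p : G.Walk u v} (hp : ¬p.Nil) :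
    p.edges = s(u, p.snd) :: p.tail.edges := by
  conv_lhs => rw [← cons_tail_eq p hp]
  rfl

theorem IsCycle.eq_snd_or_eq_penultimate_of_mem_edges {c : G.Walk u u} (hc : c.IsCycle)
    (h : s(u, w) ∈ c.edges) : w = c.snd ∨ w = c.penultimate := by
  rw [edges_eq_cons_tail hc.not_nil, List.mem_cons] at h
  rcases h with h | h
  · left
    rcases Sym2.eq_iff.mp h with ⟨-, h⟩ | ⟨h, -⟩
    · exact h
    · exact absurd h (c.adj_snd hc.not_nil).ne
  · right
    rw [hc.isPath_tail.eq_penultimate_of_mem_edges h, penultimate, getVert_tail,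
      length_tail]
    have := hc.three_le_length
    congr 1
    omega

theorem IsCycle.eq_getVert_two_of_mem_edges {c : G.Walk u u} (hc : c.IsCycle)
    (h : s(c.snd, w) ∈ c.edges) (hw : w ≠ u) : w = c.getVert 2 := by
  rw [edges_eq_cons_tail hc.not_nil, List.mem_cons] at h
  rcases h with h | h
  · rcases Sym2.eq_iff.mp h with ⟨h, -⟩ | ⟨-, h⟩
    · exact absurd h.symm (c.adj_snd hc.not_nil).ne
    · exact absurd h hw
  · rw [hc.isPath_tail.eq_snd_of_mem_edges h, snd, getVert_tail]

theorem IsCycle.exists_rotate_snd_eq [DecidableEq V] {a : V} {c : G.Walk a a} (hc : c.IsCycle)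
    (h : s(u, v) ∈ c.edges) :
    ∃ q : G.Walk u u, q.IsCycle ∧ q.length = c.length ∧ (∀ e, e ∈ q.edges ↔ e ∈ c.edges) ∧
      q.snd = v := by
  have hu : u ∈ c.support := c.fst_mem_support_of_mem_edges h
  have hperm := (c.rotate_edges u hu).perm
  have hrot : (c.rotate u hu).IsCycle := hc.rotate hu
  rcases hrot.eq_snd_or_eq_penultimate_of_mem_edges (hperm.mem_iff.mpr h) with hv | hv
  · exact ⟨c.rotate u hu, hrot, by simp, fun e => hperm.mem_iff, hv.symm⟩
  · refine ⟨(c.rotate u hu).reverse, hrot.reverse, by simp, fun e => ?_, by simp [hv]⟩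
    rw [edges_reverse, List.mem_reverse, hperm.mem_iff]

theorem IsPath.egirth_le_length_add_length {p q : G.Walk u v} (hp : p.IsPath) (hq : q.IsPath)
    (hne : p ≠ q) : G.egirth ≤ p.length + q.length := by
  obtain ⟨_, _, p', q', hp', hq', hc⟩ := hp.exists_isCycle_of_ne hq hne
  have hlp := hp'.edges_isInfix.length_le
  have hlq := hq'.edges_isInfix.length_le
  simp only [length_edges] at hlp hlq
  calc G.egirth ≤ (p'.append q'.reverse).length := egirth_le_length hc
    _ ≤ p.length + q.length := by simp only [length_append, length_reverse]; norm_cast; omega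

theorem IsCycle.eq_of_getVert_eq {p q : G.Walk u u} (hp : p.IsCycle) (hq : q.IsCycle)
    (hlen : p.length = q.length) {k : ℕ} (hk : ((2 * (p.length - k) : ℕ) : ℕ∞) < G.egirth)
    (h : ∀ i ≤ k, p.getVert i = q.getVert i) : p = q := by
  have hk0 : 0 < k := by
    have := hk.trans_le (egirth_le_length hp)
    norm_cast at this
    omega
  have hdrop : p.drop k = (q.drop k).copy (h k le_rfl).symm rfl := by
    by_contra hne
    have := (hp.isPath_drop hk0).egirth_le_length_add_length
      (by simpa using hq.isPath_drop hk0) hne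
    simp only [drop_length, length_copy, ← hlen] at this
    exact absurd (hk.trans_le this) (by norm_cast; omega)
  refine ext_getVert fun i => ?_
  rcases le_or_gt i k with hi | hi
  · exact h i hi
  · obtain ⟨j, rfl⟩ := Nat.exists_eq_add_of_le hi.le
    simpa using congrArg (·.getVert j) hdrop

def turnCode (f : V → V → V → Bool) (p : G.Walk u v) (n : ℕ) : Fin n → Bool :=
  fun i => f (p.getVert i) (p.getVert (i + 1)) (p.getVert (i + 2))

theorem IsPath.getVert_eq_of_turnCode_eq {f : V → V → V → Bool}
    (hf : ∀ p c, G.Adj c p → Set.InjOn (f p c) {y | G.Adj c y ∧ y ≠ p}) {a b a' b' : V}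
    {p : G.Walk a b} {q : G.Walk a' b'} (hp : p.IsPath) (hq : q.IsPath) {n : ℕ}
    (hpn : n + 1 ≤ p.length) (hqn : n + 1 ≤ q.length) (ha : a = a') (hsnd : p.snd = q.snd)
    (hcode : p.turnCode f n = q.turnCode f n) : ∀ i ≤ n + 1, p.getVert i = q.getVert i := by
  suffices ∀ i ≤ n, p.getVert i = q.getVert i ∧ p.getVert (i + 1) = q.getVert (i + 1) by
    intro i hi
    rcases Nat.lt_or_ge i (n + 1) with hi' | hi'
    · exact (this i (by omega)).1
    · exact (Nat.le_antisymm hi hi') ▸ (this n le_rfl).2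
  intro i hi
  induction i with
  | zero => exact ⟨by simp [ha], hsnd⟩
  | succ i ih =>
    obtain ⟨h0, h1⟩ := ih (by omega)
    refine ⟨h1, ?_⟩
    have hbit : f (q.getVert i) (q.getVert (i + 1)) (p.getVert (i + 2)) =
        f (q.getVert i) (q.getVert (i + 1)) (q.getVert (i + 2)) := by
      simpa [turnCode, h0, h1] using congrFun hcode ⟨i, by omega⟩
    refine hf _ _ (q.adj_getVert_succ (by omega)).symm ⟨?_, ?_⟩ ⟨?_, ?_⟩ hbit
    · exact h1 ▸ p.adj_getVert_succ (by omega)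
    · rw [← h0]
      intro h
      have := hp.getVert_injOn (by simp only [Set.mem_ofPred_eq]; omega)
        (by simp only [Set.mem_ofPred_eq]; omega) h
      omega
    · exact q.adj_getVert_succ (by omega)
    · intro h
      have := hq.getVert_injOn (by simp only [Set.mem_ofPred_eq]; omega)
        (by simp only [Set.mem_ofPred_eq]; omega) h
      omega

end Walk

theorem injOn_tail_turnCode {f : V → V → V → Bool}
    (hf : ∀ p c, G.Adj c p → Set.InjOn (f p c) {y | G.Adj c y ∧ y ≠ p}) {g : ℕ}
    (hg : (g : ℕ∞) ≤ G.egirth) {u v w : V} :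
    Set.InjOn (fun q : G.Walk u u => q.tail.turnCode f (g / 2 - 1))
      {q | q.IsCycle ∧ q.length = g ∧ q.snd = v ∧ q.getVert 2 = w} := by
  rintro p ⟨hp, hpl, hp1, hp2⟩ q ⟨hq, hql, hq1, hq2⟩ hcode
  have h3 := hp.three_le_length
  have htail := hp.isPath_tail.getVert_eq_of_turnCode_eq hf hq.isPath_tail
    (by rw [Walk.length_tail]; omega) (by rw [Walk.length_tail]; omega) (by rw [hp1, hq1])
    (by simp [Walk.snd, hp2, hq2]) hcode
  refine hp.eq_of_getVert_eq hq (hpl.trans hql.symm) (k := g / 2 + 1) ?_ ?_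
  · calc ((2 * (p.length - (g / 2 + 1)) : ℕ) : ℕ∞) < g := by norm_cast; omega
      _ ≤ G.egirth := hg
  · rintro (_ | i) hi
    · simp
    · simpa using htail i (by omega)

end SimpleGraph

theorem IsGirthCycleEdgeSet.exists_isCycle_snd_getVert_two {V : Type*} {G : SimpleGraph V}
    {g : ℕ} {s : Set (Sym2 V)} {u v w : V} (hs : IsGirthCycleEdgeSet G g s) (huv : s(u, v) ∈ s)
    (hvw : s(v, w) ∈ s) (huw : u ≠ w) :
    ∃ q : G.Walk u u, q.IsCycle ∧ q.length = g ∧ {e | e ∈ q.edges} = s ∧ q.snd = v ∧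
      q.getVert 2 = w := by
  classical
  obtain ⟨a, c, hc, rfl, rfl⟩ := hs
  obtain ⟨q, hq, hql, hqe, hq1⟩ := hc.exists_rotate_snd_eq huv
  refine ⟨q, hq, hql, Set.ext hqe, hq1, (hq.eq_getVert_two_of_mem_edges ?_ huw.symm).symm⟩
  rw [hq1, hqe]
  exact hvw

theorem stmt10_general {V : Type*} [Fintype V] (G : SimpleGraph V) [DecidableRel G.Adj]
    (g : ℕ) (hreg : G.IsRegularOfDegree 3) (hg : G.egirth = (g : ℕ∞))
    (u v w : V) (huw : u ≠ w) :
    Set.ncard {s : Set (Sym2 V) |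
        IsGirthCycleEdgeSet G g s ∧ s(u, v) ∈ s ∧ s(v, w) ∈ s} ≤ 2 ^ (g / 2 - 1) := by
  obtain ⟨f, hf⟩ := exists_injOn_bool_of_degree_le_three fun x => (hreg x).le
  set T := {q : G.Walk u u | q.IsCycle ∧ q.length = g ∧ q.snd = v ∧ q.getVert 2 = w}
  have hinj : T.InjOn (fun q => q.tail.turnCode f (g / 2 - 1)) := injOn_tail_turnCode hf hg.ge
  have hT : T.Finite := Set.Finite.of_finite_image (Set.toFinite _) hinj
  have hS : {s : Set (Sym2 V) | IsGirthCycleEdgeSet G g s ∧ s(u, v) ∈ s ∧ s(v, w) ∈ s} ⊆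
      (fun q : G.Walk u u => {e | e ∈ q.edges}) '' T := by
    rintro s ⟨hs, hsuv, hsvw⟩
    obtain ⟨q, hq, hql, hqs, hq1, hq2⟩ := hs.exists_isCycle_snd_getVert_two hsuv hsvw huw
    exact ⟨q, ⟨hq, hql, hq1, hq2⟩, hqs⟩
  calc _ ≤ ((fun q : G.Walk u u => {e | e ∈ q.edges}) '' T).ncard :=
        Set.ncard_le_ncard hS (hT.image _)
    _ ≤ T.ncard := Set.ncard_image_le hT
    _ ≤ (Set.univ : Set (Fin (g / 2 - 1) → Bool)).ncard :=
        Set.ncard_le_ncard_of_injOn _ (fun _ _ => trivial) hinj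
    _ = 2 ^ (g / 2 - 1) := by simp [Set.ncard_univ]

/-- In a finite cubic simple graph of finite girth `g ≥ 3`, every
`2`-path `u–v–w` lies on at most `2^(⌊g/2⌋ - 1)` girth cycles. -/
theorem stmt10 {V : Type*} [Fintype V] (G : SimpleGraph V) [DecidableRel G.Adj]
    (g : ℕ) (hreg : G.IsRegularOfDegree 3) (hg3 : 3 ≤ g) (hg : G.egirth = (g : ℕ∞))
    (u v w : V) (huv : G.Adj u v) (hvw : G.Adj v w) (huw : u ≠ w) :
    Set.ncard {s : Set (Sym2 V) |
        IsGirthCycleEdgeSet G g s ∧ s(u, v) ∈ s ∧ s(v, w) ∈ s} ≤ 2 ^ (g / 2 - 1) :=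
  stmt10_general G g hreg hg u v w huw
end

section
/- Let Γ be a finite connected girth-regular graph of valence k ≥ 3 and odd girth g = 2d+1 with signature (a_1, …, a_k) such that a_k = (k−1)^d. If uv is an edge of Γ lying on exactly a_k girth cycles, then for every i ≥ d there is no vertex w of Γ with {dist(w,u), dist(w,v)} = {i, i+1}; that is, the distance sets D^i_{i+1}(u,v) and D^{i+1}_i(u,v) are empty for all i ≥ d. -/
/-!
Let `W` be the set of ends of the paths of length `d` that start at `u` and avoid `v`; since every
degree is at most `k`, `|W| ≤ (k-1)^d`. As the girth exceeds `2d`, paths of length at most `d` are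
unique, so a girth cycle through `uv` is determined by its vertex opposite to `uv`, which lies in
`W` and at distance at most `d` from `v`. With `(k-1)^d` girth cycles through `uv`, every vertex
of `W` arises this way. Hence every path of length `d` from `u` ends within distance `d` of `v`,
and a vertex `w` with `d(w,u) = i ≥ d`, `d(w,v) = i+1` is ruled out by the vertex at distance `d`
from `u` on a geodesic from `u` to `w`.
-/

open SimpleGraph

namespace SimpleGraph

variable {V : Type*} {G : SimpleGraph V} {u v w x : V}

namespace Walk

theorem IsPath.eq_of_length_add_lt_egirth {p q : G.Walk u v} (hp : p.IsPath) (hq : q.IsPath)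
    (h : ((p.length + q.length : ℕ) : ℕ∞) < G.egirth) : p = q := by
  by_contra hne
  obtain ⟨_, _, _, c, hc, hlen⟩ := hp.exists_isCycle_length_le_add_of_ne hq hne
  exact (egirth_le_length hc).not_gt (lt_of_le_of_lt (by exact_mod_cast hlen) h)

theorem exists_eq_append_of_le_length (p : G.Walk u v) {n : ℕ} (hn : n ≤ p.length) :
    ∃ (x : V) (q : G.Walk u x) (r : G.Walk x v), q.length = n ∧ p = q.append r := by
  induction p generalizing n with
  | nil => exact ⟨_, nil, nil, (Nat.le_zero.mp hn).symm, rfl⟩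
  | cons h p ih =>
    cases n with
    | zero => exact ⟨_, nil, cons h p, rfl, rfl⟩
    | succ n =>
      obtain ⟨x, q, r, hq, rfl⟩ := ih (by simpa using hn)
      exact ⟨x, cons h q, r, by simp [hq], rfl⟩

theorem IsCycle.exists_isPath_of_mem_edges {c : G.Walk x x} (hc : c.IsCycle)
    (he : s(u, v) ∈ c.edges) :
    ∃ p : G.Walk u v, p.IsPath ∧ p.length + 1 = c.length ∧
      ∀ e, e ∈ c.edges ↔ e = s(u, v) ∨ e ∈ p.edges := by
  classical
  have hu := c.fst_mem_support_of_mem_edges he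
  set c₁ := c.rotate u hu
  have hc₁ : c₁.IsCycle := hc.rotate hu
  have hperm₁ : c₁.edges.Perm c.edges := (c.rotate_edges u hu).perm
  obtain ⟨c₂, hc₂, rfl, hlen, hperm⟩ : ∃ c₂ : G.Walk u u, c₂.IsCycle ∧ c₂.snd = v ∧
      c₂.length = c.length ∧ c₂.edges.Perm c.edges := by
    have hv : v ∈ c₁.toSubgraph.neighborSet u :=
      adj_toSubgraph_iff_mem_edges.mpr (hperm₁.mem_iff.mpr he)
    rw [hc₁.neighborSet_toSubgraph_endpoint] at hv
    rcases hv with hv | hv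
    · exact ⟨c₁, hc₁, hv.symm, length_rotate .., hperm₁⟩
    · refine ⟨c₁.reverse, hc₁.reverse, by rw [snd_reverse, hv], by simp [c₁], ?_⟩
      rw [edges_reverse]
      exact (List.reverse_perm _).trans hperm₁
  refine ⟨c₂.tail.reverse, hc₂.isPath_tail.reverse, ?_, fun e => ?_⟩
  · rw [length_reverse, length_tail_add_one hc₂.not_nil, hlen]
  · rw [← hperm.mem_iff, edges_reverse, List.mem_reverse]
    conv_lhs => rw [← cons_tail_eq c₂ hc₂.not_nil, edges_cons, List.mem_cons]

end Walk

def pathEndsAvoiding (G : SimpleGraph V) (u v : V) (n : ℕ) : Set V :=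
  {w | ∃ p : G.Walk u w, p.IsPath ∧ p.length = n ∧ v ∉ p.support}

theorem ncard_pathEndsAvoiding_le [Fintype V] [DecidableRel G.Adj] {k : ℕ}
    (hdeg : ∀ x, G.degree x ≤ k) (huv : G.Adj u v) (n : ℕ) :
    (G.pathEndsAvoiding u v n).ncard ≤ (k - 1) ^ n := by
  classical
  induction n generalizing u v with
  | zero =>
    have hsub : G.pathEndsAvoiding u v 0 ⊆ {u} := by
      rintro w ⟨p, -, hp, -⟩
      exact (Walk.eq_of_length_eq_zero hp).symm
    simpa using Set.ncard_le_ncard hsub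
  | succ n ih =>
    have hsub : G.pathEndsAvoiding u v (n + 1) ⊆
        ⋃ y ∈ (G.neighborFinset u).erase v, G.pathEndsAvoiding y u n := by
      rintro w ⟨_ | ⟨h, p⟩, hp, hlen, hv⟩
      · simp at hlen
      rw [Walk.cons_isPath_iff] at hp
      rw [Walk.support_cons, List.mem_cons, not_or] at hv
      refine Set.mem_biUnion (Finset.mem_erase.mpr ⟨?_, (mem_neighborFinset ..).mpr h⟩)
        ⟨p, hp.1, by simpa using hlen, hp.2⟩
      exact fun hyv => hv.2 (hyv ▸ p.start_mem_support)
    calc (G.pathEndsAvoiding u v (n + 1)).ncard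
        ≤ (⋃ y ∈ (G.neighborFinset u).erase v, G.pathEndsAvoiding y u n).ncard :=
          Set.ncard_le_ncard hsub
      _ ≤ ∑ y ∈ (G.neighborFinset u).erase v, (G.pathEndsAvoiding y u n).ncard :=
          Finset.set_ncard_biUnion_le _ _
      _ ≤ ∑ _y ∈ (G.neighborFinset u).erase v, (k - 1) ^ n :=
          Finset.sum_le_sum fun y hy =>
            ih ((mem_neighborFinset ..).mp (Finset.mem_of_mem_erase hy)).symm
      _ ≤ (k - 1) ^ (n + 1) := by
          rw [Finset.sum_const, smul_eq_mul, pow_succ', Finset.card_erase_of_mem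
            ((mem_neighborFinset ..).mpr huv), card_neighborFinset_eq_degree]
          exact Nat.mul_le_mul_right _ (Nat.sub_le_sub_right (hdeg u) 1)

def IsOppositeVertex (G : SimpleGraph V) (d : ℕ) (s : Set (Sym2 V)) (u v w : V) : Prop :=
  ∃ (q₁ : G.Walk u w) (q₂ : G.Walk w v), q₁.IsPath ∧ q₂.IsPath ∧ q₁.length = d ∧
    q₂.length = d ∧ s = {e | e = s(u, v) ∨ e ∈ q₁.edges ∨ e ∈ q₂.edges}

namespace IsOppositeVertex

variable {d : ℕ} {s s' : Set (Sym2 V)}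

theorem dist_le (h : G.IsOppositeVertex d s u v w) : G.dist w v ≤ d := by
  obtain ⟨-, q₂, -, -, -, hq₂, -⟩ := h
  exact hq₂ ▸ SimpleGraph.dist_le q₂

theorem edgeSet_eq (hg : ((2 * d : ℕ) : ℕ∞) < G.egirth) (h : G.IsOppositeVertex d s u v w)
    (h' : G.IsOppositeVertex d s' u v w) : s = s' := by
  obtain ⟨q₁, q₂, hq₁, hq₂, hl₁, hl₂, rfl⟩ := h
  obtain ⟨q₁', q₂', hq₁', hq₂', hl₁', hl₂', rfl⟩ := h'
  rw [hq₁.eq_of_length_add_lt_egirth hq₁' (by rwa [hl₁, hl₁', ← two_mul]),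
    hq₂.eq_of_length_add_lt_egirth hq₂' (by rwa [hl₂, hl₂', ← two_mul])]

end IsOppositeVertex

end SimpleGraph

theorem IsGirthCycleEdgeSet.exists_isOppositeVertex {V : Type*} {G : SimpleGraph V} {d : ℕ}
    {s : Set (Sym2 V)} {u v : V} (hs : IsGirthCycleEdgeSet G (2 * d + 1) s) (he : s(u, v) ∈ s) :
    ∃ w ∈ G.pathEndsAvoiding u v d, G.IsOppositeVertex d s u v w := by
  obtain ⟨x, c, hc, hlen, rfl⟩ := hs
  have hd := hc.three_le_length
  obtain ⟨p, hp, hplen, hedges⟩ := hc.exists_isPath_of_mem_edges he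
  obtain ⟨w, q₁, q₂, hq₁, rfl⟩ := p.exists_eq_append_of_le_length (n := d) (by omega)
  have hq₂ : q₂.length = d := by simp only [Walk.length_append] at hplen; omega
  have hv : v ∉ q₁.support := fun hv =>
    hp.disjoint_support_of_append (Walk.not_nil_iff_lt_length.mpr (by omega)) hv
      q₂.tail.end_mem_support
  refine ⟨w, ⟨q₁, hp.of_append_left, hq₁, hv⟩, q₁, q₂, hp.of_append_left, hp.of_append_right,
    hq₁, hq₂, ?_⟩
  ext e
  simp [hedges, Walk.edges_append]

namespace SimpleGraph

variable {V : Type*} {G : SimpleGraph V} [Fintype V] [DecidableRel G.Adj] {k d : ℕ} {u v w : V}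

theorem dist_le_of_mem_pathEndsAvoiding (hdeg : ∀ x, G.degree x ≤ k)
    (hg : ((2 * d : ℕ) : ℕ∞) < G.egirth) (huv : G.Adj u v)
    (hcount : (k - 1) ^ d ≤ girthCycleCount G (2 * d + 1) s(u, v))
    (hw : w ∈ G.pathEndsAvoiding u v d) : G.dist w v ≤ d := by
  set A := {s : Set (Sym2 V) | IsGirthCycleEdgeSet G (2 * d + 1) s ∧ s(u, v) ∈ s}
  have : Nonempty V := ⟨u⟩
  choose! opp hoppW hopp using fun s (hs : s ∈ A) => hs.1.exists_isOppositeVertex hs.2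
  have hinj : Set.InjOn opp A := fun s hs s' hs' h =>
    (hopp s hs).edgeSet_eq hg (h ▸ hopp s' hs')
  have himage : opp '' A = G.pathEndsAvoiding u v d :=
    Set.eq_of_subset_of_ncard_le (Set.image_subset_iff.mpr hoppW)
      (by rw [hinj.ncard_image]; exact (ncard_pathEndsAvoiding_le hdeg huv d).trans hcount)
  obtain ⟨s, hs, rfl⟩ := himage ▸ hw
  exact (hopp s hs).dist_le

theorem dist_le_of_isPath (hdeg : ∀ x, G.degree x ≤ k) (hg : ((2 * d : ℕ) : ℕ∞) < G.egirth)
    (huv : G.Adj u v) (hcount : (k - 1) ^ d ≤ girthCycleCount G (2 * d + 1) s(u, v))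
    {p : G.Walk u w} (hp : p.IsPath) (hlen : p.length = d) : G.dist w v ≤ d := by
  classical
  by_cases hv : v ∈ p.support
  · rw [dist_comm, ← hlen]
    exact (dist_le _).trans (p.length_dropUntil_le_length hv)
  · exact dist_le_of_mem_pathEndsAvoiding hdeg hg huv hcount ⟨p, hp, hlen, hv⟩

theorem not_dist_eq_and_dist_eq_succ (hdeg : ∀ x, G.degree x ≤ k)
    (hg : ((2 * d : ℕ) : ℕ∞) < G.egirth) (huv : G.Adj u v)
    (hcount : (k - 1) ^ d ≤ girthCycleCount G (2 * d + 1) s(u, v)) {i : ℕ} (hi : d ≤ i) (w : V) :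
    ¬(G.dist w u = i ∧ G.dist w v = i + 1) := by
  rintro ⟨hwu, hwv⟩
  have hreach : G.Reachable u w :=
    huv.reachable.trans (Reachable.of_dist_ne_zero (by omega : G.dist w v ≠ 0)).symm
  obtain ⟨p, hp, hplen⟩ := hreach.exists_path_of_dist
  rw [dist_comm, hwu] at hplen
  obtain ⟨x, q, r, hq, rfl⟩ := p.exists_eq_append_of_le_length (n := d) (by omega)
  have hxv := dist_le_of_isPath hdeg hg huv hcount hp.of_append_left hq
  have hwx : G.dist w x ≤ i - d := by
    rw [Walk.length_append] at hplen
    exact (dist_le r.reverse).trans (by rw [Walk.length_reverse]; omega)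
  have := r.reverse.reachable.dist_triangle_left v
  omega

end SimpleGraph

/-- **Lemma 7.** In a finite connected girth-regular graph of valence
`k ≥ 3`, odd girth `g = 2d+1` and signature `(a 0, …, a (k-1))` with
`a (k-1) = (k-1)^d`, if `uv` is an edge lying on exactly `a (k-1)` girth cycles, then
for every `i ≥ d` there is no vertex at distance `i` from `u` and `i+1` from `v`, nor
one at distance `i+1` from `u` and `i` from `v`. -/
theorem stmt12 {V : Type*} [Fintype V] (G : SimpleGraph V) [DecidableRel G.Adj]
    (k d : ℕ) (hk : 3 ≤ k)
    (hreg : G.IsRegularOfDegree k) (hg : G.egirth = ((2 * d + 1 : ℕ) : ℕ∞))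
    (a : Fin k → ℕ)
    (hak : a ⟨k - 1, by omega⟩ = (k - 1) ^ d)
    (u v : V) (huv : G.Adj u v)
    (he : girthCycleCount G (2 * d + 1) s(u, v) = a ⟨k - 1, by omega⟩) :
    ∀ i, d ≤ i → ∀ w : V,
      ¬(G.dist w u = i ∧ G.dist w v = i + 1) ∧ ¬(G.dist w u = i + 1 ∧ G.dist w v = i) := by
  have hdeg : ∀ x, G.degree x ≤ k := fun x => (hreg x).le
  have hg' : ((2 * d : ℕ) : ℕ∞) < G.egirth := by rw [hg]; exact_mod_cast Nat.lt_succ_self _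
  have hcount : girthCycleCount G (2 * d + 1) s(u, v) = (k - 1) ^ d := he.trans hak
  intro i hi w
  exact ⟨not_dist_eq_and_dist_eq_succ hdeg hg' huv hcount.ge hi w,
    not_dist_eq_and_dist_eq_succ hdeg hg' huv.symm (by rw [Sym2.eq_swap, hcount]) hi w ∘ And.symm⟩
end

section
/- Let Γ be a finite connected cubic girth-regular graph of finite girth g with n vertices and signature (2, 2, 2). Then g divides 3n, and the total number of girth cycles of Γ equals 3n/g. -/
/-!
Every edge lies on exactly two girth cycles and every girth cycle has `g` edges, so counting
edge–cycle incidences in two ways gives `g · #cycles = 2 |E| = 3n`, the last step being the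
handshake lemma for a cubic graph.
-/

open SimpleGraph

open Finset

theorem SimpleGraph.IsRegularOfDegree.two_mul_card_edgeFinset {V : Type*} [Fintype V]
    [DecidableEq V] {G : SimpleGraph V} [DecidableRel G.Adj] {d : ℕ}
    (h : G.IsRegularOfDegree d) : 2 * #G.edgeFinset = d * Fintype.card V := by
  rw [← G.sum_degrees_eq_twice_card_edges, sum_congr rfl fun v _ => h v, sum_const,
    card_univ, smul_eq_mul, mul_comm]

section GirthCycles

variable {V : Type*} {G : SimpleGraph V} {g : ℕ} {s : Set (Sym2 V)}

theorem IsGirthCycleEdgeSet.subset_edgeSet (h : IsGirthCycleEdgeSet G g s) : s ⊆ G.edgeSet := by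
  obtain ⟨u, w, -, -, rfl⟩ := h
  exact fun _ he => w.edges_subset_edgeSet he

theorem IsGirthCycleEdgeSet.ncard_eq (h : IsGirthCycleEdgeSet G g s) : s.ncard = g := by
  classical
  obtain ⟨u, w, hcyc, rfl, rfl⟩ := h
  rw [show {e | e ∈ w.edges} = (w.edges.toFinset : Set (Sym2 V)) by ext; simp,
    Set.ncard_coe_finset, List.toFinset_card_of_nodup hcyc.edges_nodup, w.length_edges]

theorem IsGirthCycleEdgeSet.three_le (h : IsGirthCycleEdgeSet G g s) : 3 ≤ g := by
  obtain ⟨u, w, hcyc, rfl, -⟩ := h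
  exact hcyc.three_le_length

theorem girthCycleCount_mem_vertexSignature [Fintype V] {v u : V} (h : G.Adj v u) :
    girthCycleCount G g s(v, u) ∈ vertexSignature G g v :=
  Multiset.mem_map_of_mem _ (by simpa using h)

theorem ncard_girthCycleEdgeSets_mul [Fintype V] [DecidableEq V] [DecidableRel G.Adj] {k : ℕ}
    (hk : ∀ e ∈ G.edgeSet, girthCycleCount G g e = k) :
    {s | IsGirthCycleEdgeSet G g s}.ncard * g = k * #G.edgeFinset := by
  classical
  set cycles := {s | IsGirthCycleEdgeSet G g s}
  have hfin : cycles.Finite := Set.toFinite _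
  rw [Set.ncard_eq_toFinset_card _ hfin, mul_comm k]
  refine card_mul_eq_card_mul (fun s e => e ∈ s) (fun s hs => ?_) (fun e he => ?_)
  · rw [Set.Finite.mem_toFinset] at hs
    rw [← hs.ncard_eq, bipartiteAbove, ← Set.ncard_coe_finset, coe_filter]
    congr 1
    ext e
    simpa using fun he => hs.subset_edgeSet he
  · rw [← hk e (mem_edgeFinset.1 he), girthCycleCount, bipartiteBelow, ← Set.ncard_coe_finset,
      coe_filter]
    simp [cycles]

end GirthCycles

theorem stmt13_general {V : Type*} [Fintype V] (G : SimpleGraph V) [DecidableRel G.Adj]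
    (g : ℕ)
    (hreg : G.IsRegularOfDegree 3)
    (hsig : ∀ v : V, vertexSignature G g v = {2, 2, 2}) :
    g ∣ 3 * Fintype.card V ∧
      Set.ncard {s : Set (Sym2 V) | IsGirthCycleEdgeSet G g s} = 3 * Fintype.card V / g := by
  classical
  have hcount : ∀ e ∈ G.edgeSet, girthCycleCount G g e = 2 := by
    rintro ⟨v, u⟩ h
    simpa [hsig v] using girthCycleCount_mem_vertexSignature (g := g) h
  have hkey : {s | IsGirthCycleEdgeSet G g s}.ncard * g = 3 * Fintype.card V := by
    rw [ncard_girthCycleEdgeSets_mul hcount, hreg.two_mul_card_edgeFinset]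
  refine ⟨Dvd.intro_left _ hkey, ?_⟩
  obtain rfl | hg := g.eq_zero_or_pos
  · -- no cycle has length `0`, and `3n / 0 = 0` in `ℕ`
    have hempty : {s | IsGirthCycleEdgeSet G 0 s} = ∅ :=
      Set.eq_empty_of_forall_notMem fun s hs => absurd hs.three_le (by norm_num)
    simp [hempty]
  · exact (Nat.div_eq_of_eq_mul_left hg hkey.symm).symm

/-- If a finite connected cubic girth-regular graph of finite girth `g`
with `n` vertices has signature `(2, 2, 2)`, then `g` divides `3n` and the total number
of girth cycles equals `3n/g`. -/
theorem stmt13 {V : Type*} [Fintype V] (G : SimpleGraph V) [DecidableRel G.Adj]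
    (g : ℕ) (hconn : G.Connected)
    (hreg : G.IsRegularOfDegree 3) (hg : G.egirth = (g : ℕ∞))
    (hsig : ∀ v : V, vertexSignature G g v = {2, 2, 2}) :
    g ∣ 3 * Fintype.card V ∧
      Set.ncard {s : Set (Sym2 V) | IsGirthCycleEdgeSet G g s} = 3 * Fintype.card V / g :=
  stmt13_general G g hreg hsig
end

section
/- Let Γ be a finite connected cubic girth-regular graph of finite girth g with n vertices and signature (1, 1, 2). Then: (i) g is even; (ii) the set of edges lying on exactly two girth cycles forms a perfect matching of Γ; (iii) the set of edges lying on exactly one girth cycle spans a 2-regular spanning subgraph of Γ (a disjoint union of cycles covering all vertices); and (iv) g/2 divides n. -/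
open SimpleGraph

/-!
Let `C` be a girth cycle through `v`. Of the two edges of `C` at `v`, exactly one lies on two
girth cycles: if both lay on only one, each girth cycle through the third edge at `v` would share
one of them with `C` and hence be `C`. So the doubly covered edges of `C` match up its vertices,
and `g` is even. Counting pairs (directed edge, girth cycle through it) gives
`4 n = 2 g · #(girth cycles)`, hence `g / 2 ∣ n`.
-/

lemma Fintype.sum_ncard_setOf_comm {α β : Type*} [Fintype α] [Fintype β]
    (r : α → β → Prop) :
    ∑ a, {b | r a b}.ncard = ∑ b, {a | r a b}.ncard := by
  classical
  simp only [Set.ncard_eq_toFinset_card', Set.toFinset_ofPred, Finset.card_filter]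
  exact Finset.sum_comm

namespace SimpleGraph

variable {V : Type*}

lemma sum_ncard_setOf_mk_mem [Fintype V] (E : Set (Sym2 V)) (hE : ∀ e ∈ E, ¬e.IsDiag) :
    ∑ v, {u | s(v, u) ∈ E}.ncard = 2 * E.ncard := by
  classical
  have hnbr : ∀ v, (fromEdgeSet E).neighborSet v = {u | s(v, u) ∈ E} := fun v => by
    ext u
    simp only [mem_neighborSet, fromEdgeSet_adj, Set.mem_ofPred_eq, and_iff_left_iff_imp]
    exact fun h hvu => hE _ h (Sym2.mk_isDiag_iff.2 hvu)
  have hedge : (fromEdgeSet E).edgeSet = E := by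
    rw [edgeSet_fromEdgeSet, sdiff_eq_left, Set.disjoint_left]
    exact hE
  convert (fromEdgeSet E).sum_degrees_eq_twice_card_edges using 3 with v
  · rw [← card_neighborSet_eq_degree, ← Nat.card_eq_fintype_card, Nat.card_coe_set_eq, hnbr]
  · rw [← Set.ncard_coe_finset, coe_edgeFinset, hedge]

lemma Walk.IsCycle.ncard_setOf_mk_mem_edges {G : SimpleGraph V} {u v : V} {p : G.Walk u u}
    (hp : p.IsCycle) (hv : v ∈ p.support) : {w | s(v, w) ∈ p.edges}.ncard = 2 := by
  simpa only [Subgraph.neighborSet, Walk.adj_toSubgraph_iff_mem_edges] using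
    hp.ncard_neighborSet_toSubgraph_eq_two hv

end SimpleGraph

namespace IsGirthCycleEdgeSet

variable {V : Type*} {G : SimpleGraph V} {g : ℕ} {C : Set (Sym2 V)}

lemma adj (hC : IsGirthCycleEdgeSet G g C) {v u : V} (h : s(v, u) ∈ C) : G.Adj v u := by
  obtain ⟨_, w, -, -, rfl⟩ := hC
  exact w.adj_of_mem_edges h

lemma not_isDiag (hC : IsGirthCycleEdgeSet G g C) {e : Sym2 V} (he : e ∈ C) : ¬e.IsDiag := by
  obtain ⟨_, w, -, -, rfl⟩ := hC
  exact G.not_isDiag_of_mem_edgeSet (w.edges_subset_edgeSet he)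

lemma ncard_eq_s15 (hC : IsGirthCycleEdgeSet G g C) : C.ncard = g := by
  classical
  obtain ⟨_, w, hw, rfl, rfl⟩ := hC
  rw [← w.length_edges, ← List.toFinset_card_of_nodup hw.edges_nodup, ← Set.ncard_coe_finset]
  congr 1
  ext e
  simp

lemma ncard_setOf_mk_mem (hC : IsGirthCycleEdgeSet G g C) {v u : V} (h : s(v, u) ∈ C) :
    {w | s(v, w) ∈ C}.ncard = 2 := by
  obtain ⟨_, w, hw, -, rfl⟩ := hC
  exact hw.ncard_setOf_mk_mem_edges (w.fst_mem_support_of_mem_edges h)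

end IsGirthCycleEdgeSet

section girthCycleCount

variable {V : Type*} {G : SimpleGraph V} {g : ℕ}

lemma girthCycleCount_eq_zero_of_not_adj {v u : V} (h : ¬G.Adj v u) :
    girthCycleCount G g s(v, u) = 0 := by
  have hempty : {C | IsGirthCycleEdgeSet G g C ∧ s(v, u) ∈ C} = ∅ :=
    Set.eq_empty_of_forall_notMem fun C hC => h (hC.1.adj hC.2)
  rw [girthCycleCount, hempty, Set.ncard_empty]

lemma eq_of_girthCycleCount_eq_one [Finite V] {e : Sym2 V} (he : girthCycleCount G g e = 1)
    {C D : Set (Sym2 V)} (hC : IsGirthCycleEdgeSet G g C) (heC : e ∈ C)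
    (hD : IsGirthCycleEdgeSet G g D) (heD : e ∈ D) : C = D :=
  (Set.ncard_le_one_iff).1 he.le ⟨hC, heC⟩ ⟨hD, heD⟩

variable [Fintype V]

lemma ncard_setOf_adj_girthCycleCount_eq (v : V) (k : ℕ) :
    {u | G.Adj v u ∧ girthCycleCount G g s(v, u) = k}.ncard =
      (vertexSignature G g v).count k := by
  classical
  rw [vertexSignature, Multiset.count_map, ← Finset.filter_val, Finset.card_val,
    ← Set.ncard_coe_finset]
  congr 1
  ext u
  simp [eq_comm]

lemma sum_girthCycleCount_eq_sum_vertexSignature (v : V) :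
    ∑ u, girthCycleCount G g s(v, u) = (vertexSignature G g v).sum := by
  classical
  rw [vertexSignature, ← Finset.sum_eq_multiset_sum]
  refine (Finset.sum_subset (Finset.subset_univ _) fun u _ hu => ?_).symm
  exact girthCycleCount_eq_zero_of_not_adj (by simpa using hu)

lemma sum_sum_girthCycleCount :
    ∑ v, ∑ u, girthCycleCount G g s(v, u) = 2 * g * {C | IsGirthCycleEdgeSet G g C}.ncard := by
  classical
  calc ∑ v, ∑ u, girthCycleCount G g s(v, u)
      = ∑ v, ∑ C, {u | IsGirthCycleEdgeSet G g C ∧ s(v, u) ∈ C}.ncard :=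
        Finset.sum_congr rfl fun v _ => Fintype.sum_ncard_setOf_comm _
    _ = ∑ C, ∑ v, {u | IsGirthCycleEdgeSet G g C ∧ s(v, u) ∈ C}.ncard := Finset.sum_comm
    _ = ∑ C, if IsGirthCycleEdgeSet G g C then 2 * g else 0 := by
        refine Finset.sum_congr rfl fun C _ => ?_
        split_ifs with hC
        · simp only [hC, true_and]
          rw [sum_ncard_setOf_mk_mem C fun e => hC.not_isDiag, hC.ncard_eq_s15]
        · simp [hC]
    _ = 2 * g * {C | IsGirthCycleEdgeSet G g C}.ncard := by
        rw [← Finset.sum_filter, Finset.sum_const, smul_eq_mul, mul_comm,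
          Set.ncard_eq_toFinset_card', Set.toFinset_ofPred]

end girthCycleCount

section signature

variable {V : Type*} [Fintype V] {G : SimpleGraph V} {g : ℕ} {v : V}

lemma girthCycleCount_eq_one_or_eq_two (hv : vertexSignature G g v = {1, 1, 2}) {u : V}
    (hu : G.Adj v u) : girthCycleCount G g s(v, u) = 1 ∨ girthCycleCount G g s(v, u) = 2 := by
  by_contra! h
  have hk := ncard_setOf_adj_girthCycleCount_eq (G := G) (g := g) v (girthCycleCount G g s(v, u))
  rw [hv, Multiset.count_eq_zero.2 (by simpa [eq_comm] using h), Set.ncard_eq_zero] at hk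
  exact hk.subset ⟨hu, rfl⟩

lemma ncard_setOf_adj_girthCycleCount_eq_one (hv : vertexSignature G g v = {1, 1, 2}) :
    {u | G.Adj v u ∧ girthCycleCount G g s(v, u) = 1}.ncard = 2 := by
  rw [ncard_setOf_adj_girthCycleCount_eq, hv]
  decide

lemma ncard_setOf_adj_girthCycleCount_eq_two (hv : vertexSignature G g v = {1, 1, 2}) :
    {u | G.Adj v u ∧ girthCycleCount G g s(v, u) = 2}.ncard = 1 := by
  rw [ncard_setOf_adj_girthCycleCount_eq, hv]
  decide

lemma existsUnique_adj_girthCycleCount_eq_two (hv : vertexSignature G g v = {1, 1, 2}) :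
    ∃! u, G.Adj v u ∧ girthCycleCount G g s(v, u) = 2 := by
  obtain ⟨u, hu⟩ := Set.ncard_eq_one.1 (ncard_setOf_adj_girthCycleCount_eq_two hv)
  exact ⟨u, (Set.ext_iff.1 hu u).2 rfl, fun w hw => (Set.ext_iff.1 hu w).1 hw⟩

lemma girthCycleCount_ne_one_of_mem (hv : vertexSignature G g v = {1, 1, 2})
    {C : Set (Sym2 V)} (hC : IsGirthCycleEdgeSet G g C) {x y : V} (hxy : x ≠ y)
    (hx : s(v, x) ∈ C) (hy : s(v, y) ∈ C) (hx1 : girthCycleCount G g s(v, x) = 1) :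
    girthCycleCount G g s(v, y) ≠ 1 := by
  intro hy1
  have hone : {u | G.Adj v u ∧ girthCycleCount G g s(v, u) = 1} ⊆ {x, y} := by
    refine (Set.eq_of_subset_of_ncard_le ?_ ?_).symm.subset
    · rintro u (rfl | rfl)
      exacts [⟨hC.adj hx, hx1⟩, ⟨hC.adj hy, hy1⟩]
    · rw [ncard_setOf_adj_girthCycleCount_eq_one hv, Set.ncard_pair hxy]
  obtain ⟨z, ⟨-, hz2⟩, hzuniq⟩ := existsUnique_adj_girthCycleCount_eq_two hv
  have hD : ∀ D, IsGirthCycleEdgeSet G g D ∧ s(v, z) ∈ D → D = C := by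
    rintro D ⟨hD, hzD⟩
    obtain ⟨t, htD, htz⟩ :=
      Set.exists_ne_of_one_lt_ncard (by rw [hD.ncard_setOf_mk_mem hzD]; norm_num) z
    have ht1 : girthCycleCount G g s(v, t) = 1 :=
      (girthCycleCount_eq_one_or_eq_two hv (hD.adj htD)).resolve_right
        fun ht2 => htz (hzuniq t ⟨hD.adj htD, ht2⟩)
    have htC : s(v, t) ∈ C := by
      rcases hone ⟨hD.adj htD, ht1⟩ with rfl | rfl <;> assumption
    exact eq_of_girthCycleCount_eq_one ht1 hD htD hC htC
  have hle : girthCycleCount G g s(v, z) ≤ 1 :=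
    (Set.ncard_le_one_iff).2 fun ha hb => (hD _ ha).trans (hD _ hb).symm
  omega

lemma ncard_setOf_mk_mem_eq_two_mul (hv : vertexSignature G g v = {1, 1, 2})
    {C : Set (Sym2 V)} (hC : IsGirthCycleEdgeSet G g C) :
    {u | s(v, u) ∈ C}.ncard =
      2 * {u | s(v, u) ∈ C ∧ girthCycleCount G g s(v, u) = 2}.ncard := by
  by_cases hvC : ∃ u, s(v, u) ∈ C
  swap
  · simp [not_exists.1 hvC]
  obtain ⟨u, hu⟩ := hvC
  obtain ⟨x, y, hx, hy, hxy⟩ :=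
    (Set.one_lt_ncard_iff (s := {u | s(v, u) ∈ C})).1 (by rw [hC.ncard_setOf_mk_mem hu]; norm_num)
  have hle : {u | s(v, u) ∈ C ∧ girthCycleCount G g s(v, u) = 2}.ncard ≤ 1 :=
    ncard_setOf_adj_girthCycleCount_eq_two hv ▸
      Set.ncard_le_ncard fun w hw => ⟨hC.adj hw.1, hw.2⟩
  have hpos : 0 < {u | s(v, u) ∈ C ∧ girthCycleCount G g s(v, u) = 2}.ncard := by
    rw [Set.ncard_pos]
    rcases girthCycleCount_eq_one_or_eq_two hv (hC.adj hx) with hx1 | hx2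
    · exact ⟨y, hy, (girthCycleCount_eq_one_or_eq_two hv (hC.adj hy)).resolve_left
        (girthCycleCount_ne_one_of_mem hv hC hxy hx hy hx1)⟩
    · exact ⟨x, hx, hx2⟩
  rw [hC.ncard_setOf_mk_mem hu]
  omega

lemma even_of_isGirthCycleEdgeSet (hsig : ∀ v, vertexSignature G g v = {1, 1, 2})
    {C : Set (Sym2 V)} (hC : IsGirthCycleEdgeSet G g C) : Even g := by
  have hC2 := sum_ncard_setOf_mk_mem {e ∈ C | girthCycleCount G g e = 2}
    fun e he => hC.not_isDiag he.1
  have h := sum_ncard_setOf_mk_mem C fun e => hC.not_isDiag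
  simp only [ncard_setOf_mk_mem_eq_two_mul (hsig _) hC, ← Finset.mul_sum, hC.ncard_eq_s15] at h
  simp only [Set.mem_sep_iff] at hC2
  exact ⟨{e ∈ C | girthCycleCount G g e = 2}.ncard, by omega⟩

end signature

theorem stmt15_general {V : Type*} [Fintype V] (G : SimpleGraph V)
    (g : ℕ) (hg : G.egirth = (g : ℕ∞))
    (hsig : ∀ v : V, vertexSignature G g v = {1, 1, 2}) :
    Even g ∧
      (∀ v : V, ∃! u : V, G.Adj v u ∧ girthCycleCount G g s(v, u) = 2) ∧
      (∀ v : V, Set.ncard {u : V | G.Adj v u ∧ girthCycleCount G g s(v, u) = 1} = 2) ∧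
      g / 2 ∣ Fintype.card V := by
  obtain ⟨u, w, hw, hlen⟩ :=
    (exists_egirth_eq_length (G := G)).2 fun h => by simp [h.egirth_eq_top] at hg
  have hC : IsGirthCycleEdgeSet G g {e | e ∈ w.edges} :=
    ⟨u, w, hw, by exact_mod_cast hlen.symm.trans hg, rfl⟩
  obtain ⟨k, rfl⟩ := even_of_isGirthCycleEdgeSet hsig hC
  have hcount := sum_sum_girthCycleCount (G := G) (g := k + k)
  simp only [sum_girthCycleCount_eq_sum_vertexSignature, hsig, Finset.sum_const,
    Finset.card_univ, smul_eq_mul, Multiset.insert_eq_cons, Multiset.sum_cons,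
    Multiset.sum_singleton] at hcount
  refine ⟨⟨k, rfl⟩, fun v => existsUnique_adj_girthCycleCount_eq_two (hsig v),
    fun v => ncard_setOf_adj_girthCycleCount_eq_one (hsig v), ?_⟩
  refine ⟨{C | IsGirthCycleEdgeSet G (k + k) C}.ncard, ?_⟩
  rw [show (k + k) / 2 = k by omega]
  linarith

/-- If a finite connected cubic girth-regular graph of finite girth `g`
with `n` vertices has signature `(1, 1, 2)`, then: (i) `g` is even; (ii) the edges lying
on exactly two girth cycles form a perfect matching (every vertex has a unique neighbour
along such an edge); (iii) the edges lying on exactly one girth cycle span a `2`-regular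
spanning subgraph (every vertex has exactly two neighbours along such edges); and
(iv) `g/2` divides `n`. -/
theorem stmt15 {V : Type*} [Fintype V] (G : SimpleGraph V) [DecidableRel G.Adj]
    (g : ℕ) (hconn : G.Connected)
    (hreg : G.IsRegularOfDegree 3) (hg : G.egirth = (g : ℕ∞))
    (hsig : ∀ v : V, vertexSignature G g v = {1, 1, 2}) :
    Even g ∧
      (∀ v : V, ∃! u : V, G.Adj v u ∧ girthCycleCount G g s(v, u) = 2) ∧
      (∀ v : V, Set.ncard {u : V | G.Adj v u ∧ girthCycleCount G g s(v, u) = 1} = 2) ∧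
      g / 2 ∣ Fintype.card V :=
  stmt15_general G g hg hsig
end

section
/- Let Γ be a finite connected cubic girth-regular graph of girth 3 with signature (a, b, c), a ≤ b ≤ c. Then either Γ is isomorphic to the complete graph K_4 (with signature (2, 2, 2)), or the signature of Γ is (0, 1, 1). -/
open SimpleGraph

/-!
For an edge `uv`, the girth-3 cycles through `uv` are the triangles `uvw`, so `ε(uv)` is the
number of common neighbours of `u` and `v`; in a cubic graph the signature at `v` is thus the
degree sequence of the graph induced on the three neighbours of `v`.

If some edge `pq` lies on two triangles `pqr` and `pqs`, then either `r ~ s`, and `{p, q, r, s}`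
is a clique closed under adjacency, which by connectivity is all of `G`; or `r ≁ s`, and the third
neighbour of `r` is adjacent to neither `p` nor `q`, so the signatures at `p` and `r` are
`{2, 1, 1}` and `{1, 1, 0}`, contradicting girth-regularity. Otherwise every edge lies on at most
one triangle, and the signature at a vertex of a triangle is `{1, 1, 0}`.
-/

theorem Multiset.eq_of_triple_eq_of_sorted {α : Type*} [LinearOrder α] {a b c p q r : α}
    (hab : a ≤ b) (hbc : b ≤ c) (hpq : p ≤ q) (hqr : q ≤ r)
    (h : ({a, b, c} : Multiset α) = {p, q, r}) : a = p ∧ b = q ∧ c = r := by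
  simpa using List.Perm.eq_of_sortedLE (l₁ := [a, b, c]) (l₂ := [p, q, r])
    (List.Pairwise.sortedLE (by simp [hab, hbc, hab.trans hbc]))
    (List.Pairwise.sortedLE (by simp [hpq, hqr, hpq.trans hqr])) (Multiset.coe_eq_coe.mp h)

namespace SimpleGraph

variable {V : Type*} {G : SimpleGraph V}

lemma Walk.exists_eq_triangle_of_length_eq_three {u : V} (w : G.Walk u u) (h : w.length = 3) :
    ∃ (x y : V) (hux : G.Adj u x) (hxy : G.Adj x y) (hyu : G.Adj y u),
      w = .cons hux (.cons hxy (.cons hyu .nil)) := by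
  rcases w with _ | ⟨hux, _ | ⟨hxy, _ | ⟨hyu, _ | ⟨_, _⟩⟩⟩⟩ <;> simp at h
  exact ⟨_, _, hux, hxy, hyu, rfl⟩

lemma exists_triangle_of_egirth_eq_three (hg : G.egirth = 3) :
    ∃ u x y, G.Adj u x ∧ G.Adj x y ∧ G.Adj y u := by
  obtain ⟨u, w, -, hw⟩ := exists_egirth_eq_length.mpr (by rw [← egirth_eq_top, hg]; simp)
  obtain ⟨x, y, hux, hxy, hyu, -⟩ :=
    w.exists_eq_triangle_of_length_eq_three (by exact_mod_cast (hg.symm.trans hw).symm)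
  exact ⟨u, x, y, hux, hxy, hyu⟩

lemma isGirthCycleEdgeSet_three_iff {s : Set (Sym2 V)} :
    IsGirthCycleEdgeSet G 3 s ↔
      ∃ x y z, G.Adj x y ∧ G.Adj y z ∧ G.Adj z x ∧ s = {s(x, y), s(y, z), s(z, x)} := by
  constructor
  · rintro ⟨x, w, -, hw, rfl⟩
    obtain ⟨y, z, hxy, hyz, hzx, rfl⟩ := w.exists_eq_triangle_of_length_eq_three hw
    exact ⟨x, y, z, hxy, hyz, hzx, by ext; simp⟩
  · rintro ⟨x, y, z, hxy, hyz, hzx, rfl⟩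
    refine ⟨x, .cons hxy (.cons hyz (.cons hzx .nil)), ?_, rfl, by ext; simp⟩
    have := hxy.ne; have := hyz.ne; have := hzx.ne
    simp [Walk.cons_isCycle_iff]
    tauto

lemma girthCycleCount_three_eq_ncard_commonNeighbors {u v : V} (huv : G.Adj u v) :
    girthCycleCount G 3 s(u, v) = (G.commonNeighbors u v).ncard := by
  have htri : {s | IsGirthCycleEdgeSet G 3 s ∧ s(u, v) ∈ s} =
      (fun w ↦ {s(u, v), s(v, w), s(w, u)}) '' G.commonNeighbors u v := by
    ext s
    simp only [isGirthCycleEdgeSet_three_iff, Set.mem_image, mem_commonNeighbors]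
    constructor
    · rintro ⟨⟨x, y, z, hxy, hyz, hzx, rfl⟩, he⟩
      simp only [Set.mem_insert_iff, Set.mem_singleton_iff, Sym2.eq_iff] at he
      rcases he with (⟨rfl, rfl⟩ | ⟨rfl, rfl⟩) | (⟨rfl, rfl⟩ | ⟨rfl, rfl⟩) |
        (⟨rfl, rfl⟩ | ⟨rfl, rfl⟩)
      · exact ⟨z, ⟨hzx.symm, hyz⟩, rfl⟩
      · exact ⟨z, ⟨hyz, hzx.symm⟩, by ext; simp [Sym2.eq_swap]; tauto⟩
      · exact ⟨x, ⟨hxy.symm, hzx⟩, by ext; simp [Sym2.eq_swap]; tauto⟩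
      · exact ⟨x, ⟨hzx, hxy.symm⟩, by ext; simp [Sym2.eq_swap]; tauto⟩
      · exact ⟨y, ⟨hyz.symm, hxy⟩, by ext; simp [Sym2.eq_swap]; tauto⟩
      · exact ⟨y, ⟨hxy, hyz.symm⟩, by ext; simp [Sym2.eq_swap]; tauto⟩
    · rintro ⟨w, ⟨huw, hvw⟩, rfl⟩
      exact ⟨⟨u, v, w, huv, hvw, huw.symm, rfl⟩, by simp⟩
  rw [girthCycleCount, htri, Set.InjOn.ncard_image]
  rintro w ⟨huw, -⟩ w' ⟨-, hvw'⟩ h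
  have hm : s(v, w) ∈ ({s(u, v), s(v, w'), s(w', u)} : Set (Sym2 V)) := by
    simp only at h; rw [← h]; simp
  simp only [Set.mem_insert_iff, Set.mem_singleton_iff, Sym2.eq_iff] at hm
  have := huv.ne; have := huw.ne; have := hvw'.ne
  grind

lemma Connected.forall_mem_of_adj_closed (hconn : G.Connected) {S : Set V} {u : V} (hu : u ∈ S)
    (hS : ∀ p q, p ∈ S → G.Adj p q → q ∈ S) (t : V) : t ∈ S := by
  obtain ⟨w⟩ := hconn u t
  induction w with
  | nil => exact hu
  | cons h _ ih => exact ih (hS _ _ hu h)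

variable [Fintype V] [DecidableRel G.Adj]

lemma girthCycleCount_three_eq_sum {u v : V} (huv : G.Adj u v) :
    girthCycleCount G 3 s(u, v) = ∑ w ∈ G.neighborFinset u, if G.Adj v w then 1 else 0 := by
  rw [girthCycleCount_three_eq_ncard_commonNeighbors huv, ← Finset.card_filter,
    ← Set.ncard_coe_finset]
  congr 1
  ext w
  simp [mem_commonNeighbors]

lemma vertexSignature_three_eq [DecidableEq V] {v x y z : V}
    (hN : G.neighborFinset v = {x, y, z}) (hxy : x ≠ y) (hxz : x ≠ z) (hyz : y ≠ z) :
    vertexSignature G 3 v =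
      {(if G.Adj x y then 1 else 0) + (if G.Adj x z then 1 else 0),
        (if G.Adj y x then 1 else 0) + (if G.Adj y z then 1 else 0),
        (if G.Adj z x then 1 else 0) + (if G.Adj z y then 1 else 0)} := by
  have hfin : (G.neighborSet v).toFinite.toFinset = {x, y, z} := by
    rw [← hN]; ext; simp
  have hadj : ∀ w ∈ ({x, y, z} : Finset V), G.Adj v w := fun w hw ↦ by
    rwa [← hN, mem_neighborFinset] at hw
  rw [vertexSignature, hfin, Multiset.map_congr rfl fun w hw ↦
    girthCycleCount_three_eq_sum (hadj w hw), hN]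
  simp [Finset.sum_insert, hxy, hxz, hyz, -Finset.sum_boole]

lemma IsRegularOfDegree.neighborFinset_eq [DecidableEq V] (hreg : G.IsRegularOfDegree 3)
    {v x y z : V} (hx : G.Adj v x) (hy : G.Adj v y) (hz : G.Adj v z)
    (hxy : x ≠ y) (hxz : x ≠ z) (hyz : y ≠ z) :
    G.neighborFinset v = {x, y, z} := by
  refine (Finset.eq_of_subset_of_card_le ?_ ?_).symm
  · intro w
    simp only [Finset.mem_insert, Finset.mem_singleton, mem_neighborFinset]
    rintro (rfl | rfl | rfl) <;> assumption
  · rw [card_neighborFinset_eq_degree, hreg v,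
      Finset.card_eq_three.mpr ⟨x, y, z, hxy, hxz, hyz, rfl⟩]

lemma IsRegularOfDegree.exists_neighborFinset_eq [DecidableEq V] (hreg : G.IsRegularOfDegree 3)
    {v x y : V} (hx : G.Adj v x) (hy : G.Adj v y) (hxy : x ≠ y) :
    ∃ z, G.Adj v z ∧ z ≠ x ∧ z ≠ y ∧ G.neighborFinset v = {x, y, z} := by
  obtain ⟨z, hz, hzxy⟩ := Finset.exists_mem_notMem_of_card_lt_card (s := {x, y})
    (t := G.neighborFinset v)
    (by rw [card_neighborFinset_eq_degree, hreg v, Finset.card_pair hxy]; norm_num)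
  rw [mem_neighborFinset] at hz
  simp only [Finset.mem_insert, Finset.mem_singleton, not_or] at hzxy
  exact ⟨z, hz, hzxy.1, hzxy.2,
    hreg.neighborFinset_eq hx hy hz hxy (Ne.symm hzxy.1) (Ne.symm hzxy.2)⟩

lemma Connected.nonempty_iso_top_of_isRegularOfDegree_three (hconn : G.Connected)
    (hreg : G.IsRegularOfDegree 3) {u v x y : V} (huv : G.Adj u v) (hux : G.Adj u x)
    (huy : G.Adj u y) (hvx : G.Adj v x) (hvy : G.Adj v y) (hxy : G.Adj x y) :
    Nonempty (G ≃g (⊤ : SimpleGraph (Fin 4))) := by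
  classical
  have hNu := hreg.neighborFinset_eq huv hux huy hvx.ne hvy.ne hxy.ne
  have hNv := hreg.neighborFinset_eq huv.symm hvx hvy hux.ne huy.ne hxy.ne
  have hNx := hreg.neighborFinset_eq hux.symm hvx.symm hxy huv.ne huy.ne hvy.ne
  have hNy := hreg.neighborFinset_eq huy.symm hvy.symm hxy.symm huv.ne hux.ne hvx.ne
  have hS : ∀ t, t ∈ ({u, v, x, y} : Set V) := by
    refine hconn.forall_mem_of_adj_closed (u := u) (by simp) fun p q hp hpq ↦ ?_
    rw [← mem_neighborFinset] at hpq
    rcases hp with rfl | rfl | rfl | rfl <;> simp_all <;> tauto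
  have hcard : Fintype.card V = 4 := by
    rw [← Finset.card_univ, show Finset.univ = insert u (G.neighborFinset u) by
        ext t; simpa [hNu] using hS t,
      Finset.card_insert_of_notMem (by simp), card_neighborFinset_eq_degree, hreg u]
  obtain rfl : G = ⊤ := by
    ext p q
    rw [top_adj]
    refine ⟨Adj.ne, fun hpq ↦ ?_⟩
    rcases hS p with rfl | rfl | rfl | rfl <;> rcases hS q with rfl | rfl | rfl | rfl <;>
      first | exact absurd rfl hpq | assumption | exact Adj.symm ‹_›
  exact ⟨Iso.completeGraph (Fintype.equivFinOfCardEq hcard)⟩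

lemma IsRegularOfDegree.vertexSignature_three_of_clique (hreg : G.IsRegularOfDegree 3)
    {u v x y : V} (huv : G.Adj u v) (hux : G.Adj u x) (huy : G.Adj u y) (hvx : G.Adj v x)
    (hvy : G.Adj v y) (hxy : G.Adj x y) :
    vertexSignature G 3 u = {2, 2, 2} := by
  classical
  rw [vertexSignature_three_eq (hreg.neighborFinset_eq huv hux huy hvx.ne hvy.ne hxy.ne)
    hvx.ne hvy.ne hxy.ne]
  simp [hvx, hvy, hxy, hvx.symm, hvy.symm, hxy.symm]

lemma IsRegularOfDegree.vertexSignature_three_ne_of_diamond (hreg : G.IsRegularOfDegree 3)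
    {p q r s : V} (hpq : G.Adj p q) (hpr : G.Adj p r) (hps : G.Adj p s) (hqr : G.Adj q r)
    (hqs : G.Adj q s) (hne : r ≠ s) (hrs : ¬G.Adj r s) :
    vertexSignature G 3 p ≠ vertexSignature G 3 r := by
  classical
  have hNp := hreg.neighborFinset_eq hpq hpr hps hqr.ne hqs.ne hne
  have hNq := hreg.neighborFinset_eq hpq.symm hqr hqs hpr.ne hps.ne hne
  obtain ⟨z, hrz, hzp, hzq, hNr⟩ :=
    hreg.exists_neighborFinset_eq hpr.symm hqr.symm hpq.ne
  have hpz : ¬G.Adj p z := by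
    rw [← mem_neighborFinset, hNp]
    simp only [Finset.mem_insert, Finset.mem_singleton, not_or]
    exact ⟨hzq, hrz.ne', fun hzs ↦ hrs (hzs ▸ hrz)⟩
  have hqz : ¬G.Adj q z := by
    rw [← mem_neighborFinset, hNq]
    simp only [Finset.mem_insert, Finset.mem_singleton, not_or]
    exact ⟨hzp, hrz.ne', fun hzs ↦ hrs (hzs ▸ hrz)⟩
  rw [vertexSignature_three_eq hNp hqr.ne hqs.ne hne,
    vertexSignature_three_eq hNr hpq.ne hzp.symm hzq.symm]
  simp [hqr, hqs, hqr.symm, hqs.symm, hrs, mt G.adj_symm hrs, hpq, hpq.symm, hpz, hqz,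
    mt G.adj_symm hpz, mt G.adj_symm hqz]
  decide

lemma IsRegularOfDegree.vertexSignature_three_of_triangle (hreg : G.IsRegularOfDegree 3)
    {u x y : V} (hux : G.Adj u x) (hxy : G.Adj x y) (hyu : G.Adj y u)
    (hD : ∀ p q r s, G.Adj p q → G.Adj p r → G.Adj p s → G.Adj q r → G.Adj q s →
      r = s) :
    vertexSignature G 3 u = {0, 1, 1} := by
  classical
  obtain ⟨w, huw, hwx, hwy, hNu⟩ := hreg.exists_neighborFinset_eq hux hyu.symm hxy.ne
  have hxw : ¬G.Adj x w := fun hxw ↦ hwy (hD u x w y hux huw hyu.symm hxw hxy)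
  have hyw : ¬G.Adj y w := fun hyw ↦ hwx (hD u y w x hyu.symm huw hux hyw hxy.symm)
  rw [vertexSignature_three_eq hNu hxy.ne hwx.symm hwy.symm]
  simp [hxy, hxy.symm, hxw, hyw, mt G.adj_symm hxw, mt G.adj_symm hyw]
  decide

end SimpleGraph

/-- A finite connected cubic girth-regular graph of girth `3` with
signature `(a, b, c)` is either isomorphic to `K₄` with signature `(2, 2, 2)`, or has
signature `(0, 1, 1)`. -/
theorem stmt16 {V : Type*} [Fintype V] (G : SimpleGraph V) [DecidableRel G.Adj]
    (hconn : G.Connected)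
    (hreg : G.IsRegularOfDegree 3) (hg : G.egirth = (3 : ℕ∞))
    (a b c : ℕ) (hab : a ≤ b) (hbc : b ≤ c)
    (hsig : ∀ v : V, vertexSignature G 3 v = {a, b, c}) :
    (Nonempty (G ≃g (⊤ : SimpleGraph (Fin 4))) ∧ a = 2 ∧ b = 2 ∧ c = 2) ∨
      (a = 0 ∧ b = 1 ∧ c = 1) := by
  by_cases hD : ∀ p q r s, G.Adj p q → G.Adj p r → G.Adj p s → G.Adj q r → G.Adj q s →
      r = s
  · obtain ⟨u, x, y, hux, hxy, hyu⟩ := exists_triangle_of_egirth_eq_three hg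
    right
    exact Multiset.eq_of_triple_eq_of_sorted hab hbc zero_le_one le_rfl
      ((hsig u).symm.trans (hreg.vertexSignature_three_of_triangle hux hxy hyu hD))
  push Not at hD
  obtain ⟨p, q, r, s, hpq, hpr, hps, hqr, hqs, hne⟩ := hD
  by_cases hrs : G.Adj r s
  · left
    exact ⟨hconn.nonempty_iso_top_of_isRegularOfDegree_three hreg hpq hpr hps hqr hqs hrs,
      Multiset.eq_of_triple_eq_of_sorted hab hbc le_rfl le_rfl
        ((hsig p).symm.trans (hreg.vertexSignature_three_of_clique hpq hpr hps hqr hqs hrs))⟩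
  · exact absurd ((hsig p).trans (hsig r).symm)
      (hreg.vertexSignature_three_ne_of_diamond hpq hpr hps hqr hqs hne hrs)
end

section
/- There is no finite cubic girth-regular graph of girth 4 whose signature (a, b, c), a ≤ b ≤ c, has c = 3; in particular, the signatures (1, 2, 3) and (2, 3, 3) do not occur among cubic girth-regular graphs of girth 4, and the signature (2, 3, 3) does not occur among cubic girth-regular graphs of girth 5. -/
open SimpleGraph

/-!
Through an edge `uv`, a `4`-cycle is the same as an edge between `N(u) - v` and `N(v) - u`; in a
triangle-free graph a `5`-cycle is a neighbour `x ≠ v` of `u` together with an edge between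
`N(x) - u` and `N(v) - u`.

Girth `4`: if `uv` lies on three `4`-cycles, exactly one pair `x₂y₂` between `N(u) - v = {x₁, x₂}`
and `N(v) - u = {y₁, y₂}` is not an edge. Then `ux₁` lies on three `4`-cycles and `x₂u`, `x₂y₁` on
two each, so `u` and `x₂` have different signatures.

Girth `5`, signature `(2, 3, 3)`: every vertex `u` lies on exactly one edge `uv` on two pentagons
(a `2`-edge). Solving the three equations at `u` shows that the path `x₁ - u - x₂` through the
other two neighbours lies on two pentagons and each `v - u - xᵢ` on one. Hence no pentagon
contains a path `b - a - c - m` whose end edges are `2`-edges, so the pentagon through `v - u - x₁`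
continues along the edge `x₁w'` that is not a `2`-edge and returns to `v` through some `y ~ w'`;
likewise the `2`-partner of `x₂` is adjacent to `w'`. Doing the same for `x₂` gives `y' ≠ y`, and
since `y - v - y'` lies on two pentagons, `w'` has a fourth neighbour in `N(y')`.
-/

namespace GirthRegular

variable {V : Type*} {G : SimpleGraph V} {u v : V}

lemma snd_eq_or_penultimate_eq {c : G.Walk v v} (hc : c.IsCycle) (h : s(v, u) ∈ c.edges) :
    c.snd = u ∨ c.penultimate = u := by
  have hu : u ∈ c.toSubgraph.neighborSet v := c.mem_edges_toSubgraph.mpr h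
  simpa [hc.neighborSet_toSubgraph_endpoint, eq_comm] using hu

lemma exists_cons_eq_of_snd_eq (huv : G.Adj u v) {c : G.Walk v v} (hc : ¬ c.Nil)
    (h : c.snd = u) : ∃ p : G.Walk u v, Walk.cons huv.symm p = c := by
  subst h
  exact ⟨c.tail, c.cons_tail_eq hc⟩

lemma exists_cons_isCycle_of_mem_edges (huv : G.Adj u v) {w : V} {c : G.Walk w w}
    (hc : c.IsCycle) (he : s(u, v) ∈ c.edges) :
    ∃ p : G.Walk u v, (Walk.cons huv.symm p).IsCycle ∧ p.length + 1 = c.length ∧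
      {e | e ∈ (Walk.cons huv.symm p).edges} = {e | e ∈ c.edges} := by
  classical
  have hv : v ∈ c.support := c.snd_mem_support_of_mem_edges he
  set d := c.rotate v hv
  have hd : d.IsCycle := hc.rotate hv
  have hde : {e | e ∈ d.edges} = {e | e ∈ c.edges} := by
    ext e
    exact (c.rotate_edges v hv).mem_iff
  have he' : s(v, u) ∈ d.edges := by
    rw [Sym2.eq_swap]
    exact (c.rotate_edges v hv).mem_iff.mpr he
  rcases snd_eq_or_penultimate_eq hd he' with h | h
  · obtain ⟨p, hp⟩ := exists_cons_eq_of_snd_eq huv hd.not_nil h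
    refine ⟨p, hp ▸ hd, ?_, hp ▸ hde⟩
    rw [← Walk.length_cons huv.symm, hp, Walk.length_rotate]
  · obtain ⟨p, hp⟩ := exists_cons_eq_of_snd_eq huv hd.reverse.not_nil (d.snd_reverse.trans h)
    refine ⟨p, hp ▸ hd.reverse, ?_, ?_⟩
    · rw [← Walk.length_cons huv.symm, hp, Walk.length_reverse, Walk.length_rotate]
    · rw [hp, ← hde]
      ext e
      simp

lemma setOf_isGirthCycleEdgeSet_eq_image (huv : G.Adj u v) (g : ℕ) :
    {s | IsGirthCycleEdgeSet G g s ∧ s(u, v) ∈ s} =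
      (fun p : G.Walk u v => {e | e ∈ (Walk.cons huv.symm p).edges}) ''
        {p | (Walk.cons huv.symm p).IsCycle ∧ p.length + 1 = g} := by
  ext s
  constructor
  · rintro ⟨⟨w, c, hc, rfl, rfl⟩, he⟩
    obtain ⟨p, hp, hlen, hpe⟩ := exists_cons_isCycle_of_mem_edges huv hc he
    exact ⟨p, ⟨hp, hlen⟩, hpe⟩
  · rintro ⟨p, ⟨hp, rfl⟩, rfl⟩
    exact ⟨⟨v, _, hp, rfl, rfl⟩, by simp [Sym2.eq_swap]⟩

lemma nonempty_of_egirth_ne_top (h : G.egirth ≠ ⊤) : Nonempty V := by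
  by_contra hV
  exact h (egirth_eq_top.mpr fun v => (not_nonempty_iff.mp hV).elim v)

lemma not_adj_of_three_lt_egirth (hG : 3 < G.egirth) {a b c : V} (hab : G.Adj a b)
    (hbc : G.Adj b c) : ¬ G.Adj a c := by
  intro hac
  have hcyc : (Walk.cons hab (Walk.cons hbc (Walk.cons hac.symm Walk.nil))).IsCycle := by
    simp [Walk.cons_isCycle_iff, hab.ne, hbc.ne, hac.ne, hab.ne', hac.ne']
  exact (egirth_le_length hcyc).not_gt (by simpa using hG)

lemma not_adj_of_four_lt_egirth (hG : 4 < G.egirth) {a b c d : V} (hab : G.Adj a b)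
    (hbc : G.Adj b c) (hcd : G.Adj c d) (hac : a ≠ c) (hbd : b ≠ d) : ¬ G.Adj a d := by
  intro had
  have hcyc : (Walk.cons hab (Walk.cons hbc (Walk.cons hcd (Walk.cons had.symm
      Walk.nil)))).IsCycle := by
    simp [Walk.cons_isCycle_iff, hab.ne, hbc.ne, hcd.ne, had.ne, hab.ne', had.ne', hac, hbd,
      Ne.symm hac]
  exact (egirth_le_length hcyc).not_gt (by simpa using hG)

variable (G) in
def edgesBetween (A B : Set V) : Set (V × V) :=
  {ab | ab.1 ∈ A ∧ ab.2 ∈ B ∧ G.Adj ab.1 ab.2}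

lemma ncard_edgesBetween_comm (A B : Set V) :
    (edgesBetween G A B).ncard = (edgesBetween G B A).ncard := by
  rw [← Set.ncard_image_of_injective _ Prod.swap_injective]
  congr 1
  ext ⟨a, b⟩
  simp [edgesBetween, G.adj_comm, and_left_comm]

lemma ncard_edgesBetween_pair [DecidableRel G.Adj] {a₁ a₂ b₁ b₂ : V} (ha : a₁ ≠ a₂)
    (hb : b₁ ≠ b₂) :
    (edgesBetween G {a₁, a₂} {b₁, b₂}).ncard =
      (if G.Adj a₁ b₁ then 1 else 0) + (if G.Adj a₁ b₂ then 1 else 0) +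
        (if G.Adj a₂ b₁ then 1 else 0) + (if G.Adj a₂ b₂ then 1 else 0) := by
  classical
  have : edgesBetween G {a₁, a₂} {b₁, b₂} =
      ↑((({a₁, a₂} : Finset V) ×ˢ ({b₁, b₂} : Finset V)).filter fun ab => G.Adj ab.1 ab.2) := by
    ext
    simp [edgesBetween, and_assoc]
  rw [this, Set.ncard_coe_finset, Finset.card_filter, Finset.sum_product,
    Finset.sum_pair ha, Finset.sum_pair hb, Finset.sum_pair hb]
  simp only [add_assoc]

lemma ncard_setOf_fst_mem_pair [Finite V] {x₁ x₂ : V} (hx : x₁ ≠ x₂) (E : V → Set (V × V)) :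
    {t : V × V × V | t.1 ∈ ({x₁, x₂} : Set V) ∧ t.2 ∈ E t.1}.ncard =
      (E x₁).ncard + (E x₂).ncard := by
  have : {t : V × V × V | t.1 ∈ ({x₁, x₂} : Set V) ∧ t.2 ∈ E t.1} =
      Prod.mk x₁ '' E x₁ ∪ Prod.mk x₂ '' E x₂ := by
    ext ⟨x, p⟩
    simp only [Set.mem_insert_iff, Set.mem_singleton_iff, Set.mem_ofPred_eq, Set.mem_union,
      Set.mem_image, Prod.mk.injEq]
    constructor
    · rintro ⟨rfl | rfl, hp⟩
      · exact .inl ⟨p, hp, rfl, rfl⟩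
      · exact .inr ⟨p, hp, rfl, rfl⟩
    · rintro (⟨q, hq, rfl, rfl⟩ | ⟨q, hq, rfl, rfl⟩)
      · exact ⟨.inl rfl, hq⟩
      · exact ⟨.inr rfl, hq⟩
  rw [this, Set.ncard_union_eq, Set.ncard_image_of_injective _ (Prod.mk_right_injective x₁),
    Set.ncard_image_of_injective _ (Prod.mk_right_injective x₂)]
  rw [Set.disjoint_left]
  rintro _ ⟨p, -, rfl⟩ ⟨q, -, h⟩
  exact hx (congrArg Prod.fst h).symm

lemma setOf_isGirthCycleEdgeSet_four_eq_image (huv : G.Adj u v) :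
    {s | IsGirthCycleEdgeSet G 4 s ∧ s(u, v) ∈ s} =
      (fun ab : V × V => ({s(v, u), s(u, ab.1), s(ab.1, ab.2), s(ab.2, v)} : Set (Sym2 V))) ''
        edgesBetween G (G.neighborSet u \ {v}) (G.neighborSet v \ {u}) := by
  rw [setOf_isGirthCycleEdgeSet_eq_image huv]
  ext s
  constructor
  · rintro ⟨p, ⟨hp, hlen⟩, rfl⟩
    rcases p with _ | ⟨hua, _ | ⟨hab, _ | ⟨hbv, _ | ⟨_, p⟩⟩⟩⟩ <;>
      simp only [Walk.length_cons, Walk.length_nil, zero_add, Nat.reduceAdd, Nat.reduceEqDiff,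
        OfNat.one_ne_ofNat] at hlen
    simp only [Walk.cons_isCycle_iff, Walk.cons_isPath_iff, Walk.support_cons,
      Walk.support_nil, List.mem_cons, List.not_mem_nil] at hp
    refine ⟨(_, _), ⟨⟨hua, ?_⟩, ⟨hbv.symm, ?_⟩, hab⟩, by ext; simp⟩ <;>
      simp only [Set.mem_singleton_iff] <;> tauto
  · rintro ⟨⟨a, b⟩, ⟨⟨hua, hav⟩, ⟨hvb, hbu⟩, hab⟩, rfl⟩
    simp only [Set.mem_singleton_iff, mem_neighborSet] at hua hav hvb hbu
    refine ⟨Walk.cons hua (Walk.cons hab (Walk.cons hvb.symm Walk.nil)), ⟨?_, rfl⟩, by ext; simp⟩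
    simp [Walk.cons_isCycle_iff, hua.ne, hab.ne, hvb.ne, huv.ne, hvb.ne', huv.ne', hav,
      Ne.symm hav, Ne.symm hbu]

lemma girthCycleCount_four (huv : G.Adj u v) :
    girthCycleCount G 4 s(u, v) =
      (edgesBetween G (G.neighborSet u \ {v}) (G.neighborSet v \ {u})).ncard := by
  rw [girthCycleCount, setOf_isGirthCycleEdgeSet_four_eq_image huv, Set.InjOn.ncard_image]
  rintro ⟨a, b⟩ ⟨⟨hua, hav⟩, ⟨hvb, hbu⟩, -⟩ ⟨a', b'⟩ ⟨⟨-, hav'⟩, ⟨-, hbu'⟩, -⟩ heq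
  simp only [Set.mem_singleton_iff, mem_neighborSet] at *
  -- `a'` and `b'` are read off from the edges of the cycle at `u` and at `v`
  have hmem : ∀ e ∈ ({s(v, u), s(u, a'), s(a', b'), s(b', v)} : Set (Sym2 V)),
      e ∈ ({s(v, u), s(u, a), s(a, b), s(b, v)} : Set (Sym2 V)) := fun e he => heq ▸ he
  have ha := hmem s(u, a') (by simp)
  have hb := hmem s(b', v) (by simp)
  simp only [Set.mem_insert_iff, Sym2.eq, Sym2.rel_iff', Prod.mk.injEq, Prod.swap_prod_mk, true_and,
    Set.mem_singleton_iff, and_true] at ha hb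
  clear heq hmem
  grind [Adj.ne]

lemma setOf_isGirthCycleEdgeSet_five_eq_image (hG : 3 < G.egirth) (huv : G.Adj u v) :
    {s | IsGirthCycleEdgeSet G 5 s ∧ s(u, v) ∈ s} =
      (fun t : V × V × V =>
        ({s(v, u), s(u, t.1), s(t.1, t.2.1), s(t.2.1, t.2.2), s(t.2.2, v)} : Set (Sym2 V))) ''
      {t : V × V × V | t.1 ∈ G.neighborSet u \ {v} ∧
        t.2 ∈ edgesBetween G (G.neighborSet t.1 \ {u}) (G.neighborSet v \ {u})} := by
  rw [setOf_isGirthCycleEdgeSet_eq_image huv]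
  ext s
  constructor
  · rintro ⟨p, ⟨hp, hlen⟩, rfl⟩
    rcases p with _ | ⟨hua, _ | ⟨hab, _ | ⟨hbc, _ | ⟨hcv, _ | ⟨_, p⟩⟩⟩⟩⟩ <;>
      simp only [Walk.length_cons, Walk.length_nil, zero_add, Nat.reduceAdd, Nat.reduceEqDiff,
        OfNat.one_ne_ofNat] at hlen
    simp only [Walk.cons_isCycle_iff, Walk.cons_isPath_iff, Walk.support_cons,
      Walk.support_nil, List.mem_cons, List.not_mem_nil] at hp
    refine ⟨(_, _, _), ⟨⟨hua, ?_⟩, ⟨hab, ?_⟩, ⟨hcv.symm, ?_⟩, hbc⟩, by ext; simp⟩ <;>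
      simp only [Set.mem_singleton_iff] <;> tauto
  · rintro ⟨⟨a, b, c⟩, ⟨⟨hua, hav⟩, ⟨hab, hbu⟩, ⟨hvc, hcu⟩, hbc⟩, rfl⟩
    simp only [Set.mem_singleton_iff, mem_neighborSet] at hua hav hab hbu hvc hcu hbc
    have hac : a ≠ c := by rintro rfl; exact not_adj_of_three_lt_egirth hG hua hvc.symm huv
    have hbv : b ≠ v := by rintro rfl; exact not_adj_of_three_lt_egirth hG hua hab huv
    refine ⟨Walk.cons hua (Walk.cons hab (Walk.cons hbc (Walk.cons hvc.symm Walk.nil))),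
      ⟨?_, rfl⟩, by ext; simp⟩
    simp [Walk.cons_isCycle_iff, hua.ne, hab.ne, hbc.ne, hvc.ne, huv.ne, hvc.ne', huv.ne',
      hav, hac, hbv, Ne.symm hav, Ne.symm hbu, Ne.symm hcu, Ne.symm hbv]

lemma girthCycleCount_five (hG : 3 < G.egirth) (huv : G.Adj u v) :
    girthCycleCount G 5 s(u, v) = {t : V × V × V | t.1 ∈ G.neighborSet u \ {v} ∧
      t.2 ∈ edgesBetween G (G.neighborSet t.1 \ {u}) (G.neighborSet v \ {u})}.ncard := by
  rw [girthCycleCount, setOf_isGirthCycleEdgeSet_five_eq_image hG huv, Set.InjOn.ncard_image]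
  rintro ⟨a, b, c⟩ ⟨⟨hua, hav⟩, ⟨hab, hbu⟩, ⟨hvc, hcu⟩, -⟩ ⟨a', b', c'⟩
    ⟨⟨-, hav'⟩, ⟨-, hbu'⟩, ⟨-, hcu'⟩, -⟩ heq
  simp only [Set.mem_singleton_iff, mem_neighborSet] at *
  have hac : a ≠ c := by rintro rfl; exact not_adj_of_three_lt_egirth hG hua hvc.symm huv
  have hbv : b ≠ v := by rintro rfl; exact not_adj_of_three_lt_egirth hG hua hab huv
  -- `a'`, `b'`, `c'` are read off from the edges of the cycle at `u`, at `a'` and at `v`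
  have hmem : ∀ e ∈ ({s(v, u), s(u, a'), s(a', b'), s(b', c'), s(c', v)} : Set (Sym2 V)),
      e ∈ ({s(v, u), s(u, a), s(a, b), s(b, c), s(c, v)} : Set (Sym2 V)) := fun e he => heq ▸ he
  have ha := hmem s(u, a') (by simp)
  have hb := hmem s(a', b') (by simp)
  have hc := hmem s(c', v) (by simp)
  simp only [Set.mem_insert_iff, Sym2.eq, Sym2.rel_iff', Prod.mk.injEq, Prod.swap_prod_mk, true_and,
    Set.mem_singleton_iff, and_true] at ha hb hc
  clear heq hmem
  grind [Adj.ne]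

lemma adj_iff_of_neighborSet_eq {a b c d : V} (hN : G.neighborSet v = {a, b, c}) :
    G.Adj v d ↔ d = a ∨ d = b ∨ d = c := by
  rw [← mem_neighborSet, hN]
  simp

lemma exists_neighborSet_eq_of_adj_of_adj {a b : V} (h3 : (G.neighborSet v).ncard = 3)
    (ha : G.Adj v a) (hb : G.Adj v b) (hab : a ≠ b) :
    ∃ c, G.neighborSet v = {a, b, c} ∧ a ≠ c ∧ b ≠ c := by
  have hsub : ({a, b} : Set V) ⊆ G.neighborSet v := by simp [Set.insert_subset_iff, ha, hb]
  obtain ⟨c, hc⟩ : ∃ c, G.neighborSet v \ {a, b} = {c} := by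
    rw [← Set.ncard_eq_one, Set.ncard_sdiff hsub, h3, Set.ncard_pair hab]
  have hcN : c ∈ G.neighborSet v \ {a, b} := hc ▸ rfl
  simp only [Set.mem_sdiff, Set.mem_insert_iff, Set.mem_singleton_iff, not_or] at hcN
  refine ⟨c, ?_, Ne.symm hcN.2.1, Ne.symm hcN.2.2⟩
  rw [← Set.union_sdiff_cancel hsub, hc, Set.insert_union, Set.singleton_union]

lemma exists_neighborSet_eq_of_adj {a : V} (h3 : (G.neighborSet v).ncard = 3)
    (ha : G.Adj v a) : ∃ b c, G.neighborSet v = {a, b, c} ∧ a ≠ b ∧ a ≠ c ∧ b ≠ c := by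
  obtain ⟨b, hb, hba⟩ := Set.exists_ne_of_one_lt_ncard (s := G.neighborSet v) (by omega) a
  obtain ⟨c, hN, hac, hbc⟩ := exists_neighborSet_eq_of_adj_of_adj h3 ha hb (Ne.symm hba)
  exact ⟨b, c, hN, Ne.symm hba, hac, hbc⟩

lemma neighborSet_eq_of_three_adj (h3 : (G.neighborSet v).ncard = 3) {a b c : V}
    (ha : G.Adj v a) (hb : G.Adj v b) (hc : G.Adj v c) (hab : a ≠ b) (hac : a ≠ c)
    (hbc : b ≠ c) : G.neighborSet v = {a, b, c} := by
  obtain ⟨d, hN, -, -⟩ := exists_neighborSet_eq_of_adj_of_adj h3 ha hb hab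
  rcases (adj_iff_of_neighborSet_eq hN).1 hc with rfl | rfl | rfl
  · exact absurd rfl hac
  · exact absurd rfl hbc
  · exact hN

lemma false_of_four_adj (h3 : (G.neighborSet v).ncard = 3) {a b c d : V} (ha : G.Adj v a)
    (hb : G.Adj v b) (hc : G.Adj v c) (hd : G.Adj v d) (hab : a ≠ b) (hac : a ≠ c)
    (had : a ≠ d) (hbc : b ≠ c) (hbd : b ≠ d) (hcd : c ≠ d) : False := by
  rcases (adj_iff_of_neighborSet_eq (neighborSet_eq_of_three_adj h3 ha hb hc hab hac hbc)).1 hd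
    with rfl | rfl | rfl
  · exact had rfl
  · exact hbd rfl
  · exact hcd rfl

section Signature

variable [Fintype V] {g k : ℕ}

lemma mem_vertexSignature (g : ℕ) (h : G.Adj u v) :
    girthCycleCount G g s(u, v) ∈ vertexSignature G g u :=
  Multiset.mem_map_of_mem _ (by simpa using h)

lemma exists_adj_of_mem_vertexSignature (h : k ∈ vertexSignature G g u) :
    ∃ v, G.Adj u v ∧ girthCycleCount G g s(u, v) = k := by
  obtain ⟨v, hv, rfl⟩ := Multiset.mem_map.mp h
  exact ⟨v, by simpa using hv, rfl⟩

lemma two_le_count_vertexSignature {w : V} (hv : G.Adj u v) (hw : G.Adj u w) (hvw : v ≠ w)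
    (hkv : girthCycleCount G g s(u, v) = k) (hkw : girthCycleCount G g s(u, w) = k) :
    2 ≤ (vertexSignature G g u).count k := by
  classical
  rw [vertexSignature, Multiset.count_map, ← Finset.filter_val, Finset.card_val,
    ← Finset.card_pair hvw]
  apply Finset.card_le_card
  simp [Finset.insert_subset_iff, hv, hw, hkv, hkw]

lemma exists_adj_eq_two (hsig : vertexSignature G g u = {2, 3, 3}) :
    ∃ v, G.Adj u v ∧ girthCycleCount G g s(u, v) = 2 :=
  exists_adj_of_mem_vertexSignature (by rw [hsig]; simp)

lemma girthCycleCount_eq_three (hsig : vertexSignature G g u = {2, 3, 3}) {x : V}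
    (hv : G.Adj u v) (hx : G.Adj u x) (hxv : x ≠ v) (h2 : girthCycleCount G g s(u, v) = 2) :
    girthCycleCount G g s(u, x) = 3 := by
  have hmem := mem_vertexSignature g hx
  rw [hsig] at hmem
  simp only [Multiset.insert_eq_cons, Multiset.mem_cons, Multiset.mem_singleton] at hmem
  rcases hmem with h | h | h
  · have := two_le_count_vertexSignature hx hv hxv h h2
    simp [hsig] at this
  all_goals exact h

end Signature

lemma girthCycleCount_four_eq [DecidableRel G.Adj] {x₁ x₂ y₁ y₂ : V}
    (hu : G.neighborSet u = {v, x₁, x₂}) (hv : G.neighborSet v = {u, y₁, y₂}) (hv₁ : v ≠ x₁)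
    (hv₂ : v ≠ x₂) (hx : x₁ ≠ x₂) (hu₁ : u ≠ y₁) (hu₂ : u ≠ y₂) (hy : y₁ ≠ y₂) :
    girthCycleCount G 4 s(u, v) =
      (if G.Adj x₁ y₁ then 1 else 0) + (if G.Adj x₁ y₂ then 1 else 0) +
        (if G.Adj x₂ y₁ then 1 else 0) + (if G.Adj x₂ y₂ then 1 else 0) := by
  rw [girthCycleCount_four ((adj_iff_of_neighborSet_eq hu).2 (.inl rfl)), hu, hv,
    Set.insert_sdiff_self_of_notMem (by simp [hv₁, hv₂]),
    Set.insert_sdiff_self_of_notMem (by simp [hu₁, hu₂]), ncard_edgesBetween_pair hx hy]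

lemma exists_adj_of_girthCycleCount_four_eq_three (hu3 : (G.neighborSet u).ncard = 3)
    (hv3 : (G.neighborSet v).ncard = 3) (huv : G.Adj u v) (h : girthCycleCount G 4 s(u, v) = 3) :
    ∃ x₁ x₂ y₁ y₂, G.neighborSet u = {v, x₁, x₂} ∧ G.neighborSet v = {u, y₁, y₂} ∧
      v ≠ x₁ ∧ v ≠ x₂ ∧ x₁ ≠ x₂ ∧ u ≠ y₁ ∧ u ≠ y₂ ∧ y₁ ≠ y₂ ∧
      G.Adj x₁ y₁ ∧ G.Adj x₁ y₂ ∧ G.Adj x₂ y₁ ∧ ¬ G.Adj x₂ y₂ := by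
  classical
  have hprod : ((G.neighborSet u \ {v}) ×ˢ (G.neighborSet v \ {u})).ncard = 4 := by
    rw [Set.ncard_prod, Set.ncard_sdiff_singleton_of_mem (s := G.neighborSet u) huv,
      Set.ncard_sdiff_singleton_of_mem (s := G.neighborSet v) huv.symm, hu3, hv3]
  obtain ⟨⟨x₂, y₂⟩, ⟨⟨hux₂, hx₂v⟩, ⟨hvy₂, hy₂u⟩⟩, h₂₂⟩ :=
    Set.exists_mem_notMem_of_ncard_lt_ncard
      (s := edgesBetween G (G.neighborSet u \ {v}) (G.neighborSet v \ {u}))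
      (t := (G.neighborSet u \ {v}) ×ˢ (G.neighborSet v \ {u}))
      (by rw [← girthCycleCount_four huv, h, hprod]; norm_num)
      ((Set.finite_of_ncard_ne_zero (hprod ▸ four_ne_zero)).subset
        fun _ hp => Set.mem_prod.2 ⟨hp.1, hp.2.1⟩)
  simp only [mem_neighborSet, Set.mem_singleton_iff] at hux₂ hx₂v hvy₂ hy₂u
  replace h₂₂ : ¬ G.Adj x₂ y₂ := fun h => h₂₂ ⟨⟨hux₂, hx₂v⟩, ⟨hvy₂, hy₂u⟩, h⟩
  obtain ⟨x₁, hNu, hvx₁, hx₂x₁⟩ := exists_neighborSet_eq_of_adj_of_adj hu3 huv hux₂ (Ne.symm hx₂v)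
  obtain ⟨y₁, hNv, huy₁, hy₂y₁⟩ :=
    exists_neighborSet_eq_of_adj_of_adj hv3 huv.symm hvy₂ (Ne.symm hy₂u)
  rw [Set.pair_comm] at hNu hNv
  rw [girthCycleCount_four_eq hNu hNv hvx₁ (Ne.symm hx₂v) hx₂x₁.symm huy₁ (Ne.symm hy₂u)
    hy₂y₁.symm, if_neg h₂₂] at h
  obtain ⟨h₁₁, h₁₂, h₂₁⟩ : G.Adj x₁ y₁ ∧ G.Adj x₁ y₂ ∧ G.Adj x₂ y₁ := by
    split_ifs at h with h₁₁ h₁₂ h₂₁ <;> first | omega | exact ⟨h₁₁, h₁₂, h₂₁⟩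
  exact ⟨x₁, x₂, y₁, y₂, hNu, hNv, hvx₁, Ne.symm hx₂v, hx₂x₁.symm, huy₁, Ne.symm hy₂u,
    hy₂y₁.symm, h₁₁, h₁₂, h₂₁, h₂₂⟩

lemma girthCycleCount_four_of_adj (hcub : ∀ v : V, (G.neighborSet v).ncard = 3)
    {x₁ x₂ y₁ y₂ : V} (hNu : G.neighborSet u = {v, x₁, x₂}) (hNv : G.neighborSet v = {u, y₁, y₂})
    (hv₁ : v ≠ x₁) (hv₂ : v ≠ x₂) (hx : x₁ ≠ x₂) (hu₁ : u ≠ y₁) (hu₂ : u ≠ y₂) (hy : y₁ ≠ y₂)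
    (h₁₁ : G.Adj x₁ y₁) (h₁₂ : G.Adj x₁ y₂) (h₂₁ : G.Adj x₂ y₁) (h₂₂ : ¬ G.Adj x₂ y₂) :
    girthCycleCount G 4 s(u, x₁) = 3 ∧ girthCycleCount G 4 s(x₂, u) = 2 ∧
      girthCycleCount G 4 s(x₂, y₁) = 2 := by
  classical
  have huv : G.Adj u v := (adj_iff_of_neighborSet_eq hNu).2 (.inl rfl)
  have hux₁ : G.Adj u x₁ := (adj_iff_of_neighborSet_eq hNu).2 (.inr (.inl rfl))
  have hux₂ : G.Adj u x₂ := (adj_iff_of_neighborSet_eq hNu).2 (.inr (.inr rfl))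
  have hvy₁ : G.Adj v y₁ := (adj_iff_of_neighborSet_eq hNv).2 (.inr (.inl rfl))
  have hvy₂ : G.Adj v y₂ := (adj_iff_of_neighborSet_eq hNv).2 (.inr (.inr rfl))
  have hNx₁ : G.neighborSet x₁ = {u, y₁, y₂} :=
    neighborSet_eq_of_three_adj (hcub x₁) hux₁.symm h₁₁ h₁₂ hu₁ hu₂ hy
  have hNy₁ : G.neighborSet y₁ = {x₂, v, x₁} :=
    neighborSet_eq_of_three_adj (hcub y₁) h₂₁.symm hvy₁.symm h₁₁.symm hv₂.symm hx.symm hv₁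
  obtain ⟨m, hNx₂, hum, hy₁m⟩ := exists_neighborSet_eq_of_adj_of_adj (hcub x₂) hux₂.symm h₂₁ hu₁
  have hx₂m : G.Adj x₂ m := (adj_iff_of_neighborSet_eq hNx₂).2 (.inr (.inr rfl))
  have hmv : ¬ G.Adj m v := by
    intro h
    rcases (adj_iff_of_neighborSet_eq hNv).1 h.symm with rfl | rfl | rfl
    · exact hum rfl
    · exact hy₁m rfl
    · exact h₂₂ hx₂m
  have hmx₁ : ¬ G.Adj m x₁ := by
    intro h
    rcases (adj_iff_of_neighborSet_eq hNx₁).1 h.symm with rfl | rfl | rfl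
    · exact hum rfl
    · exact hy₁m rfl
    · exact h₂₂ hx₂m
  refine ⟨?_, ?_, ?_⟩
  · rw [girthCycleCount_four_eq (by rw [hNu, Set.insert_comm]) hNx₁ hv₁.symm hx hv₂ hu₁ hu₂ hy,
      if_pos hvy₁, if_pos hvy₂, if_pos h₂₁, if_neg h₂₂]
  · rw [girthCycleCount_four_eq hNx₂ (by rw [hNu, Set.pair_comm, Set.insert_comm]) hu₁ hum hy₁m
      hv₂.symm hx.symm hv₁, if_pos hvy₁.symm, if_pos h₁₁.symm, if_neg hmv, if_neg hmx₁]
  · rw [girthCycleCount_four_eq (by rw [hNx₂, Set.insert_comm]) hNy₁ hu₁.symm hy₁m hum hv₂.symm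
      hx.symm hv₁, if_pos huv, if_pos hux₁, if_neg hmv, if_neg hmx₁]

lemma false_of_vertexSignature_eq_three [Fintype V] [Nonempty V] {a b : ℕ}
    (hcub : ∀ v : V, (G.neighborSet v).ncard = 3)
    (hsig : ∀ v : V, vertexSignature G 4 v = {a, b, 3}) : False := by
  obtain ⟨u⟩ := ‹Nonempty V›
  obtain ⟨v, huv, huv3⟩ := exists_adj_of_mem_vertexSignature (u := u) (g := 4) (k := 3)
    (by rw [hsig u]; simp)
  obtain ⟨x₁, x₂, y₁, y₂, hNu, hNv, hv₁, hv₂, hx, hu₁, hu₂, hy, h₁₁, h₁₂, h₂₁, h₂₂⟩ :=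
    exists_adj_of_girthCycleCount_four_eq_three (hcub u) (hcub v) huv huv3
  obtain ⟨hux₁3, hx₂u2, hx₂y₁2⟩ :=
    girthCycleCount_four_of_adj hcub hNu hNv hv₁ hv₂ hx hu₁ hu₂ hy h₁₁ h₁₂ h₂₁ h₂₂
  have hux₁ : G.Adj u x₁ := (adj_iff_of_neighborSet_eq hNu).2 (.inr (.inl rfl))
  have hux₂ : G.Adj u x₂ := (adj_iff_of_neighborSet_eq hNu).2 (.inr (.inr rfl))
  have h3 := two_le_count_vertexSignature huv hux₁ hv₁ huv3 hux₁3
  have h2 := two_le_count_vertexSignature hux₂.symm h₂₁ hu₁ hx₂u2 hx₂y₁2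
  rw [hsig] at h2 h3
  simp only [Multiset.insert_eq_cons, Multiset.count_cons, Multiset.count_singleton] at h2 h3
  split_ifs at h2 h3 <;> omega

-- For distinct neighbours `a, b` of `u` in a triangle-free graph, the number of `5`-cycles
-- through the path `a - u - b`.
variable (G) in
noncomputable def pentagonCount (u a b : V) : ℕ :=
  (edgesBetween G (G.neighborSet a \ {u}) (G.neighborSet b \ {u})).ncard

lemma pentagonCount_comm {a b : V} : pentagonCount G u a b = pentagonCount G u b a :=
  ncard_edgesBetween_comm _ _

lemma girthCycleCount_five_eq_add [Finite V] {x₁ x₂ : V} (hG : 3 < G.egirth)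
    (hN : G.neighborSet u = {v, x₁, x₂}) (hv₁ : v ≠ x₁) (hv₂ : v ≠ x₂) (hx : x₁ ≠ x₂) :
    girthCycleCount G 5 s(u, v) = pentagonCount G u x₁ v + pentagonCount G u x₂ v := by
  have huv : G.Adj u v := (adj_iff_of_neighborSet_eq hN).2 (.inl rfl)
  rw [girthCycleCount_five hG huv, hN, Set.insert_sdiff_self_of_notMem (by simp [hv₁, hv₂])]
  exact ncard_setOf_fst_mem_pair hx fun a =>
    edgesBetween G (G.neighborSet a \ {u}) (G.neighborSet v \ {u})

lemma exists_adj_of_pentagonCount_eq_two {a b q : V} (hG : 4 < G.egirth)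
    (h3 : (G.neighborSet a).ncard = 3) (hua : G.Adj u a) (hub : G.Adj u b)
    (h : pentagonCount G u a b = 2) (haq : G.Adj a q) (hqu : q ≠ u) :
    ∃ r, G.Adj b r ∧ r ≠ u ∧ G.Adj q r := by
  set E := edgesBetween G (G.neighborSet a \ {u}) (G.neighborSet b \ {u})
  have hinj : Set.InjOn Prod.fst E := by
    rintro ⟨q₁, r₁⟩ ⟨⟨hq₁, -⟩, ⟨hr₁, -⟩, h₁⟩ ⟨q₂, r₂⟩ ⟨-, ⟨hr₂, -⟩, h₂⟩ (rfl : q₁ = q₂)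
    have hqb : q₁ ≠ b := by
      rintro rfl
      exact not_adj_of_three_lt_egirth (lt_trans (by norm_num) hG) hua.symm hub hq₁
    refine Prod.ext rfl (by_contra fun hr => ?_)
    exact not_adj_of_four_lt_egirth hG h₁.symm h₂ hr₂.symm hr hqb hr₁.symm
  have himage : Prod.fst '' E = G.neighborSet a \ {u} := by
    apply Set.eq_of_subset_of_ncard_le _ _ (Set.finite_of_ncard_ne_zero (by omega)).sdiff
    · rintro _ ⟨⟨q, r⟩, ⟨hq, -⟩, rfl⟩
      exact hq
    · rw [hinj.ncard_image, Set.ncard_sdiff_singleton_of_mem (s := G.neighborSet a) hua.symm, h3]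
      exact h.ge
  obtain ⟨⟨_, r⟩, ⟨-, ⟨hbr, hru⟩, hqr⟩, rfl⟩ : q ∈ Prod.fst '' E := himage ▸ ⟨haq, hqu⟩
  exact ⟨r, hbr, hru, hqr⟩

section GirthFive

variable [Fintype V]

lemma pentagonCount_eq_of_eq_two {x₁ x₂ : V} (hG : 3 < G.egirth)
    (hsig : vertexSignature G 5 u = {2, 3, 3}) (hN : G.neighborSet u = {v, x₁, x₂})
    (hv₁ : v ≠ x₁) (hv₂ : v ≠ x₂) (hx : x₁ ≠ x₂) (h2 : girthCycleCount G 5 s(u, v) = 2) :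
    pentagonCount G u x₁ x₂ = 2 ∧ pentagonCount G u v x₁ = 1 ∧ pentagonCount G u v x₂ = 1 := by
  have hadj : ∀ {d}, G.Adj u d ↔ d = v ∨ d = x₁ ∨ d = x₂ := adj_iff_of_neighborSet_eq hN
  have h₁ := girthCycleCount_eq_three hsig (hadj.2 (.inl rfl)) (hadj.2 (.inr (.inl rfl)))
    (Ne.symm hv₁) h2
  have h₂ := girthCycleCount_eq_three hsig (hadj.2 (.inl rfl)) (hadj.2 (.inr (.inr rfl)))
    (Ne.symm hv₂) h2
  rw [girthCycleCount_five_eq_add hG hN hv₁ hv₂ hx] at h2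
  rw [girthCycleCount_five_eq_add hG (by rw [hN, Set.insert_comm]) (Ne.symm hv₁) hx hv₂] at h₁
  rw [girthCycleCount_five_eq_add hG (by rw [hN, Set.pair_comm, Set.insert_comm])
    (Ne.symm hv₂) (Ne.symm hx) hv₁] at h₂
  rw [pentagonCount_comm (a := x₁), pentagonCount_comm (a := x₂)] at h2
  rw [pentagonCount_comm (a := x₂)] at h₁
  omega

lemma exists_neighborSet_eq_of_eq_three (hcub : ∀ v : V, (G.neighborSet v).ncard = 3)
    (hsig : ∀ v : V, vertexSignature G 5 v = {2, 3, 3}) {x : V} (hux : G.Adj u x)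
    (h3 : girthCycleCount G 5 s(u, x) = 3) :
    ∃ w w', G.neighborSet x = {u, w, w'} ∧ w ≠ u ∧ w ≠ w' ∧
      girthCycleCount G 5 s(x, w) = 2 := by
  obtain ⟨w, hxw, hw2⟩ := exists_adj_eq_two (hsig x)
  have hwu : w ≠ u := by
    rintro rfl
    rw [Sym2.eq_swap, hw2] at h3
    omega
  obtain ⟨w', hN, -, hww'⟩ := exists_neighborSet_eq_of_adj_of_adj (hcub x) hux.symm hxw hwu.symm
  exact ⟨w, w', hN, hwu, hww', hw2⟩

-- The two pentagons through `a - c - f` (`f` the third neighbour of `c`) yield one through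
-- `b - a - c - f`, which is then the only pentagon through `b - a - c`.
lemma not_adj_of_eq_two_of_eq_two (hcub : ∀ v : V, (G.neighborSet v).ncard = 3)
    (hG : 4 < G.egirth) (hsig : ∀ v : V, vertexSignature G 5 v = {2, 3, 3})
    {a b c m q : V} (hab : G.Adj a b) (hac : G.Adj a c) (hcm : G.Adj c m) (hcb : c ≠ b)
    (hma : m ≠ a) (hab2 : girthCycleCount G 5 s(a, b) = 2)
    (hcm2 : girthCycleCount G 5 s(c, m) = 2) (hbq : G.Adj b q) : ¬ G.Adj q m := by
  intro hqm
  have hG3 : 3 < G.egirth := lt_trans (by norm_num) hG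
  obtain ⟨f, hNc, hmf, haf⟩ := exists_neighborSet_eq_of_adj_of_adj (hcub c) hcm hac.symm hma
  obtain ⟨a', hNa, hba', hca'⟩ := exists_neighborSet_eq_of_adj_of_adj (hcub a) hab hac hcb.symm
  have hcf : G.Adj c f := (adj_iff_of_neighborSet_eq hNc).2 (.inr (.inr rfl))
  obtain ⟨t, hft, -, hbt⟩ := exists_adj_of_pentagonCount_eq_two hG (hcub a) hac.symm hcf
    (pentagonCount_eq_of_eq_two hG3 (hsig c) hNc hma hmf haf hcm2).1 hab hcb.symm
  have hone := (pentagonCount_eq_of_eq_two hG3 (hsig a) hNa hcb.symm hba' hca' hab2).2.1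
  have hta : t ≠ a := G.ne_of_adj_of_not_adj hft.symm (not_adj_of_three_lt_egirth hG3 hac hcf)
  have hqa : q ≠ a := G.ne_of_adj_of_not_adj hqm (not_adj_of_three_lt_egirth hG3 hac hcm)
  have := (Set.ncard_le_one_iff (Set.toFinite _)).mp hone.le
    (show (t, f) ∈ _ from ⟨⟨hbt, hta⟩, ⟨hcf, Ne.symm haf⟩, hft.symm⟩)
    (show (q, m) ∈ _ from ⟨⟨hbq, hqa⟩, ⟨hcm, hma⟩, hqm⟩)
  exact hmf (congrArg Prod.snd this).symm

lemma adj_of_pentagonCount_eq_two (hcub : ∀ v : V, (G.neighborSet v).ncard = 3)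
    (hG : 4 < G.egirth) (hsig : ∀ v : V, vertexSignature G 5 v = {2, 3, 3})
    {x₁ x₂ w w' z : V} (hux₁ : G.Adj u x₁) (hux₂ : G.Adj u x₂)
    (h : pentagonCount G u x₂ x₁ = 2) (hN₁ : G.neighborSet x₁ = {u, w, w'}) (hwu : w ≠ u)
    (hw2 : girthCycleCount G 5 s(x₁, w) = 2) (hx₂z : G.Adj x₂ z) (hzu : z ≠ u)
    (hz2 : girthCycleCount G 5 s(x₂, z) = 2) : G.Adj z w' := by
  have hG3 : 3 < G.egirth := lt_trans (by norm_num) hG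
  have hx₁x₂ : ¬ G.Adj x₁ x₂ := not_adj_of_three_lt_egirth hG3 hux₁.symm hux₂
  obtain ⟨r, hx₁r, hru, hzr⟩ := exists_adj_of_pentagonCount_eq_two hG (hcub x₂) hux₂ hux₁ h hx₂z hzu
  rcases (adj_iff_of_neighborSet_eq hN₁).1 hx₁r with rfl | rfl | rfl
  · exact absurd rfl hru
  · exact absurd hux₁ (not_adj_of_eq_two_of_eq_two hcub hG hsig hx₂z.symm hzr hx₁r.symm
      (G.ne_of_adj_of_not_adj hx₁r.symm fun h => hx₁x₂ h.symm)
      (G.ne_of_adj_of_not_adj hx₂z.symm hx₁x₂).symm (by rwa [Sym2.eq_swap])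
      (by rwa [Sym2.eq_swap]) hux₂.symm)
  · exact hzr

lemma exists_adj_of_pentagonCount_eq_one (hcub : ∀ v : V, (G.neighborSet v).ncard = 3)
    (hG : 4 < G.egirth) (hsig : ∀ v : V, vertexSignature G 5 v = {2, 3, 3}) {x w w' : V}
    (huv : G.Adj u v) (hux : G.Adj u x) (hxv : x ≠ v) (h : pentagonCount G u v x = 1)
    (hN : G.neighborSet x = {u, w, w'}) (hwu : w ≠ u) (huv2 : girthCycleCount G 5 s(u, v) = 2)
    (hw2 : girthCycleCount G 5 s(x, w) = 2) : ∃ y, G.Adj v y ∧ y ≠ u ∧ G.Adj y w' := by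
  obtain ⟨⟨y, s⟩, ⟨hvy, hyu⟩, ⟨hxs, hsu⟩, hys⟩ :=
    Set.nonempty_of_ncard_ne_zero (h.trans_ne one_ne_zero)
  rcases (adj_iff_of_neighborSet_eq hN).1 hxs with rfl | rfl | rfl
  · exact absurd rfl hsu
  · exact absurd hys (not_adj_of_eq_two_of_eq_two hcub hG hsig huv hux hxs hxv hwu huv2 hw2 hvy)
  · exact ⟨y, hvy, hyu, hys⟩

lemma exists_adj_of_eq_two_of_adj (hcub : ∀ v : V, (G.neighborSet v).ncard = 3)
    (hG : 4 < G.egirth) (hsig : ∀ v : V, vertexSignature G 5 v = {2, 3, 3}) {y y' w : V}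
    (hvu : G.Adj v u) (hvu2 : girthCycleCount G 5 s(v, u) = 2) (hvy : G.Adj v y)
    (hvy' : G.Adj v y') (hyu : y ≠ u) (hy'u : y' ≠ u) (hyy' : y ≠ y') (hyw : G.Adj y w)
    (hwv : w ≠ v) : ∃ s, G.Adj y' s ∧ G.Adj w s := by
  have hNv := neighborSet_eq_of_three_adj (hcub v) hvu hvy hvy' hyu.symm hy'u.symm hyy'
  obtain ⟨s, hy's, -, hws⟩ := exists_adj_of_pentagonCount_eq_two hG (hcub y) hvy hvy'
    (pentagonCount_eq_of_eq_two (lt_trans (by norm_num) hG) (hsig v) hNv hyu.symm hy'u.symm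
      hyy' hvu2).1 hyw hwv
  exact ⟨s, hy's, hws⟩

-- `w'` is the neighbour of `x₁` across a `3`-edge: the pentagon through `v - u - x₁` is
-- `v - y - w' - x₁ - u`, and one of the two through `x₂ - u - x₁` is `x₂ - z - w' - x₁ - u`,
-- where `x₂z` is the `2`-edge at `x₂`.
lemma exists_three_adj_of_eq_two (hcub : ∀ v : V, (G.neighborSet v).ncard = 3)
    (hG : 4 < G.egirth) (hsig : ∀ v : V, vertexSignature G 5 v = {2, 3, 3}) {x₁ x₂ : V}
    (hN : G.neighborSet u = {v, x₁, x₂}) (hv₁ : v ≠ x₁) (hv₂ : v ≠ x₂) (hx : x₁ ≠ x₂)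
    (huv2 : girthCycleCount G 5 s(u, v) = 2) :
    ∃ w' y z, G.Adj x₁ w' ∧ girthCycleCount G 5 s(x₁, w') = 3 ∧ G.Adj v y ∧ y ≠ u ∧
      G.Adj y w' ∧ G.Adj x₂ z ∧ z ≠ u ∧ girthCycleCount G 5 s(x₂, z) = 2 ∧ G.Adj z w' := by
  have hG3 : 3 < G.egirth := lt_trans (by norm_num) hG
  have huv : G.Adj u v := (adj_iff_of_neighborSet_eq hN).2 (.inl rfl)
  have hux₁ : G.Adj u x₁ := (adj_iff_of_neighborSet_eq hN).2 (.inr (.inl rfl))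
  have hux₂ : G.Adj u x₂ := (adj_iff_of_neighborSet_eq hN).2 (.inr (.inr rfl))
  obtain ⟨hx₁x₂, hvx₁, -⟩ := pentagonCount_eq_of_eq_two hG3 (hsig u) hN hv₁ hv₂ hx huv2
  obtain ⟨w, w', hN₁, hwu, hww', hw2⟩ := exists_neighborSet_eq_of_eq_three hcub hsig hux₁
    (girthCycleCount_eq_three (hsig u) huv hux₁ hv₁.symm huv2)
  obtain ⟨z, _, hN₂, hzu, -, hz2⟩ := exists_neighborSet_eq_of_eq_three hcub hsig hux₂
    (girthCycleCount_eq_three (hsig u) huv hux₂ hv₂.symm huv2)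
  have hx₁w : G.Adj x₁ w := (adj_iff_of_neighborSet_eq hN₁).2 (.inr (.inl rfl))
  have hx₁w' : G.Adj x₁ w' := (adj_iff_of_neighborSet_eq hN₁).2 (.inr (.inr rfl))
  have hx₂z : G.Adj x₂ z := (adj_iff_of_neighborSet_eq hN₂).2 (.inr (.inl rfl))
  obtain ⟨y, hvy, hyu, hyw'⟩ :=
    exists_adj_of_pentagonCount_eq_one hcub hG hsig huv hux₁ hv₁.symm hvx₁ hN₁ hwu huv2 hw2
  exact ⟨w', y, z, hx₁w', girthCycleCount_eq_three (hsig x₁) hx₁w hx₁w' hww'.symm hw2, hvy, hyu,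
    hyw', hx₂z, hzu, hz2, adj_of_pentagonCount_eq_two hcub hG hsig hux₁ hux₂
      (pentagonCount_comm.trans hx₁x₂) hN₁ hwu hw2 hx₂z hzu hz2⟩

lemma false_of_vertexSignature_eq_two_three_three [Nonempty V]
    (hcub : ∀ v : V, (G.neighborSet v).ncard = 3) (hG : 4 < G.egirth)
    (hsig : ∀ v : V, vertexSignature G 5 v = {2, 3, 3}) : False := by
  have hG3 : 3 < G.egirth := lt_trans (by norm_num) hG
  obtain ⟨u⟩ := ‹Nonempty V›
  obtain ⟨v, huv, huv2⟩ := exists_adj_eq_two (hsig u)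
  obtain ⟨x₁, x₂, hN, hv₁, hv₂, hx⟩ := exists_neighborSet_eq_of_adj (hcub u) huv
  obtain ⟨w', y, z, hx₁w', -, hvy, hyu, hyw', hx₂z, hzu, hz2, hzw'⟩ :=
    exists_three_adj_of_eq_two hcub hG hsig hN hv₁ hv₂ hx huv2
  obtain ⟨z', y', -, hx₂z', hz'3, hvy', hy'u, hy'z', -⟩ :=
    exists_three_adj_of_eq_two hcub hG hsig (by rw [hN, Set.pair_comm]) hv₂ hv₁ hx.symm huv2
  have hux₁ : G.Adj u x₁ := (adj_iff_of_neighborSet_eq hN).2 (.inr (.inl rfl))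
  have hux₂ : G.Adj u x₂ := (adj_iff_of_neighborSet_eq hN).2 (.inr (.inr rfl))
  have hnx₁v : ¬ G.Adj x₁ v := not_adj_of_three_lt_egirth hG3 hux₁.symm huv
  have hnx₂v : ¬ G.Adj x₂ v := not_adj_of_three_lt_egirth hG3 hux₂.symm huv
  have hw'v : w' ≠ v := G.ne_of_adj_of_not_adj hx₁w'.symm fun h => hnx₁v h.symm
  have hz'v : z' ≠ v := G.ne_of_adj_of_not_adj hx₂z'.symm fun h => hnx₂v h.symm
  have hyy' : y ≠ y' := by
    rintro rfl
    obtain ⟨t, hNv, hut, hyt⟩ :=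
      exists_neighborSet_eq_of_adj_of_adj (hcub v) huv.symm hvy hyu.symm
    -- the single pentagon through `u - v - y` cannot pass through both `x₁ w'` and `x₂ z'`
    have := (Set.ncard_le_one_iff (Set.toFinite _)).mp (pentagonCount_eq_of_eq_two hG3 (hsig v)
      hNv hyu.symm hut hyt (by rwa [Sym2.eq_swap])).2.1.le
      (show (x₁, w') ∈ _ from ⟨⟨hux₁, hv₁.symm⟩, ⟨hyw', hw'v⟩, hx₁w'⟩)
      (show (x₂, z') ∈ _ from ⟨⟨hux₂, hv₂.symm⟩, ⟨hy'z', hz'v⟩, hx₂z'⟩)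
    exact hx (congrArg Prod.fst this)
  obtain ⟨s, hy's, hw's⟩ :=
    exists_adj_of_eq_two_of_adj hcub hG hsig huv.symm (by rwa [Sym2.eq_swap]) hvy hvy' hyu hy'u
      hyy' hyw' hw'v
  have hzz' : z ≠ z' := by
    rintro rfl
    omega
  have hx₂y' : x₂ ≠ y' := (G.ne_of_adj_of_not_adj hvy'.symm hnx₂v).symm
  exact false_of_four_adj (hcub w') hx₁w'.symm hzw'.symm hyw'.symm hw's
    (G.ne_of_adj_of_not_adj hx₂z.symm (not_adj_of_three_lt_egirth hG3 hux₁.symm hux₂)).symm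
    (G.ne_of_adj_of_not_adj hvy.symm hnx₁v).symm
    (G.ne_of_adj_of_not_adj hy's.symm
      (not_adj_of_four_lt_egirth hG hux₁.symm huv hvy' hv₁.symm hy'u.symm)).symm
    (G.ne_of_adj_of_not_adj hvy.symm
      (not_adj_of_four_lt_egirth hG hx₂z.symm hux₂.symm huv hzu hv₂.symm)).symm
    (G.ne_of_adj_of_not_adj hy's.symm
      (not_adj_of_four_lt_egirth hG hx₂z.symm hx₂z' hy'z'.symm hzz' hx₂y')).symm
    (G.ne_of_adj_of_not_adj hy's.symm (not_adj_of_three_lt_egirth hG3 hvy.symm hvy')).symm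

end GirthFive

end GirthRegular

/-- There is no finite cubic girth-regular graph of girth `4` whose
signature `(a, b, c)` has `c = 3`; in particular the signatures `(1, 2, 3)` and
`(2, 3, 3)` do not occur at girth `4`, and `(2, 3, 3)` does not occur at girth `5`.
(Here `3`-regularity is expressed by every vertex having exactly `3` neighbours.) -/
theorem stmt18 :
    (¬ ∃ (V : Type) (inst : Fintype V) (G : SimpleGraph V) (a b : ℕ),
        (∀ v : V, (G.neighborSet v).ncard = 3) ∧ G.egirth = (4 : ℕ∞) ∧ a ≤ b ∧ b ≤ 3 ∧
        ∀ v : V, @vertexSignature V inst G 4 v = {a, b, 3}) ∧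
    (¬ ∃ (V : Type) (inst : Fintype V) (G : SimpleGraph V),
        (∀ v : V, (G.neighborSet v).ncard = 3) ∧ G.egirth = (4 : ℕ∞) ∧
        ∀ v : V, @vertexSignature V inst G 4 v = {1, 2, 3}) ∧
    (¬ ∃ (V : Type) (inst : Fintype V) (G : SimpleGraph V),
        (∀ v : V, (G.neighborSet v).ncard = 3) ∧ G.egirth = (4 : ℕ∞) ∧
        ∀ v : V, @vertexSignature V inst G 4 v = {2, 3, 3}) ∧
    (¬ ∃ (V : Type) (inst : Fintype V) (G : SimpleGraph V),
        (∀ v : V, (G.neighborSet v).ncard = 3) ∧ G.egirth = (5 : ℕ∞) ∧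
        ∀ v : V, @vertexSignature V inst G 5 v = {2, 3, 3}) := by
  refine ⟨?_, ?_, ?_, ?_⟩
  · rintro ⟨V, inst, G, a, b, hcub, hg, -, -, hsig⟩
    have := GirthRegular.nonempty_of_egirth_ne_top (G := G) (by simp [hg])
    exact GirthRegular.false_of_vertexSignature_eq_three hcub hsig
  · rintro ⟨V, inst, G, hcub, hg, hsig⟩
    have := GirthRegular.nonempty_of_egirth_ne_top (G := G) (by simp [hg])
    exact GirthRegular.false_of_vertexSignature_eq_three hcub hsig
  · rintro ⟨V, inst, G, hcub, hg, hsig⟩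
    have := GirthRegular.nonempty_of_egirth_ne_top (G := G) (by simp [hg])
    exact GirthRegular.false_of_vertexSignature_eq_three hcub hsig
  · rintro ⟨V, inst, G, hcub, hg, hsig⟩
    have := GirthRegular.nonempty_of_egirth_ne_top (G := G) (by simp [hg])
    exact GirthRegular.false_of_vertexSignature_eq_two_three_three hcub (hg ▸ by norm_num) hsig
end
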